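/- arXiv:2305.01531 — 9 statements merged into one kernel-verified Lean document; each statement's English description precedes it below -/
import Mathlib

section
/- For any integers m ≥ 2 and 0 ≤ f ≤ C(m,2), there exists c > 0 such that every n-vertex graph containing no induced subgraph on exactly m vertices with exactly f edges has a clique or an independent set of size at least c · n^{1/(m-1)}. -/
/-!
Induction on `m`. Let `A` be a set of `N` vertices containing no `m`-set with exactly `f` edges.
If some `u ∈ A` has at least `N^((m-2)/(m-1))` non-neighbours in `A`, these contain no
`(m-1)`-set with `f` edges (adding `u` would add none), and induction gives a homogeneous set
of size `c' (N^((m-2)/(m-1)))^(1/(m-2)) = c' N^(1/(m-1))`. Otherwise every vertex misses fewer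
than `N^((m-2)/(m-1))` others, and a greedy clique has size at least
`N / (N^((m-2)/(m-1)) + 1) ≥ N^(1/(m-1)) / 2`. This needs `f ≤ C(m-1, 2)`; for larger `f`
pass to the complement graph, which avoids `C(m,2) - f ≤ m - 2 ≤ C(m-1, 2)` edges on `m`-sets.
-/

open Finset
open scoped Classical

/-- The number of edges of `G` induced inside the vertex set `S`. -/
noncomputable def inducedEdgeCount {V : Type*} [DecidableEq V] (G : SimpleGraph V)
    (S : Finset V) : ℕ :=
  ((S.powersetCard 2).filter (fun p => ∃ a ∈ p, ∃ b ∈ p, G.Adj a b)).card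

namespace SimpleGraph

variable {V : Type*} (G : SimpleGraph V)

def IsHomogeneous (s : Set V) : Prop := G.IsClique s ∨ Gᶜ.IsClique s

variable {G} in
lemma IsHomogeneous.of_compl {s : Set V} (h : Gᶜ.IsHomogeneous s) : G.IsHomogeneous s := by
  rw [IsHomogeneous, compl_compl] at h
  exact h.symm

variable [DecidableEq V]

lemma exists_adj_pair_iff {x y : V} :
    (∃ a ∈ ({x, y} : Finset V), ∃ b ∈ ({x, y} : Finset V), G.Adj a b) ↔ G.Adj x y := by
  simp [G.adj_comm y x]

lemma inducedEdgeCount_insert {u : V} {S : Finset V} (hu : u ∉ S) :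
    inducedEdgeCount G (insert u S) = inducedEdgeCount G S + #(S.filter (G.Adj u)) := by
  have hinj : Set.InjOn (fun v => ({u, v} : Finset V)) S := by
    intro a ha b hb hab
    have : a ∈ ({u, b} : Finset V) := by simp only at hab; rw [← hab]; simp
    rcases mem_insert.1 this with rfl | h
    · exact absurd ha hu
    · exact mem_singleton.1 h
  have hdisj : Disjoint (S.powersetCard 2) (S.image fun v => ({u, v} : Finset V)) := by
    refine Finset.disjoint_left.2 fun p hp hp' => ?_
    obtain ⟨v, -, rfl⟩ := mem_image.1 hp'
    exact hu ((mem_powersetCard.1 hp).1 (mem_insert_self u {v}))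
  unfold inducedEdgeCount
  rw [powersetCard_succ_insert hu 1, powersetCard_one, map_eq_image, image_image]
  simp only [Nat.succ_eq_add_one, Nat.reduceAdd, Function.comp_def, Function.Embedding.coeFn_mk]
  rw [filter_union, card_union_of_disjoint (disjoint_filter_filter hdisj), filter_image,
    card_image_of_injOn (hinj.mono (filter_subset _ _))]
  simp only [exists_adj_pair_iff]

lemma inducedEdgeCount_add_compl (S : Finset V) :
    inducedEdgeCount G S + inducedEdgeCount Gᶜ S = (#S).choose 2 := by
  unfold inducedEdgeCount
  rw [← card_powersetCard, ← card_filter_add_card_filter_not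
    (fun p => ∃ a ∈ p, ∃ b ∈ p, G.Adj a b) (s := S.powersetCard 2)]
  congr 2
  ext p
  simp only [mem_filter, and_congr_right_iff]
  intro hp
  obtain ⟨x, y, hxy, rfl⟩ := card_eq_two.1 (mem_powersetCard.1 hp).2
  rw [exists_adj_pair_iff, exists_adj_pair_iff, compl_adj]
  exact and_iff_right hxy

lemma inducedEdgeCount_pair {x y : V} (hxy : x ≠ y) :
    inducedEdgeCount G {x, y} = if G.Adj x y then 1 else 0 := by
  unfold inducedEdgeCount
  rw [← card_pair hxy, powersetCard_self, filter_singleton]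
  simp only [exists_adj_pair_iff, apply_ite card, card_singleton, card_empty]

def IsEdgeCountFreeOn (m f : ℕ) (A : Finset V) : Prop :=
  ∀ S ⊆ A, #S = m → inducedEdgeCount G S ≠ f

variable {G}

lemma IsEdgeCountFreeOn.compl {m f : ℕ} {A : Finset V} (h : G.IsEdgeCountFreeOn m f A)
    (hf : f ≤ m.choose 2) : Gᶜ.IsEdgeCountFreeOn m (m.choose 2 - f) A := by
  intro S hSA hS hcount
  have hsum := G.inducedEdgeCount_add_compl S
  rw [hS] at hsum
  exact h S hSA hS (by omega)

lemma IsEdgeCountFreeOn.filter_compl_adj {m f : ℕ} {A : Finset V}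
    (h : G.IsEdgeCountFreeOn (m + 1) f A) {u : V} (hu : u ∈ A) :
    G.IsEdgeCountFreeOn m f (A.filter (Gᶜ.Adj u)) := by
  intro S hSA hS hcount
  have hnonadj : ∀ v ∈ S, ¬G.Adj u v := fun v hv =>
    ((compl_adj G u v).1 (mem_filter.1 (hSA hv)).2).2
  have huS : u ∉ S := fun huS => Gᶜ.irrefl (mem_filter.1 (hSA huS)).2
  refine h (insert u S) (insert_subset hu (hSA.trans (filter_subset _ _)))
    (by rw [card_insert_of_notMem huS, hS]) ?_
  rw [inducedEdgeCount_insert G huS, filter_false_of_mem hnonadj, card_empty, add_zero, hcount]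

lemma IsEdgeCountFreeOn.isClique {A : Finset V} (h : G.IsEdgeCountFreeOn 2 0 A) :
    G.IsClique (A : Set V) := by
  intro x hx y hy hxy
  have hpair := h {x, y} (insert_subset hx (singleton_subset_iff.2 hy)) (card_pair hxy)
  rw [inducedEdgeCount_pair G hxy] at hpair
  by_contra hadj
  exact hpair (if_neg hadj)

lemma exists_isClique_card_le_mul (d : ℕ) (B : Finset V)
    (hB : ∀ u ∈ B, #(B.filter (Gᶜ.Adj u)) ≤ d) :
    ∃ T ⊆ B, G.IsClique (T : Set V) ∧ #B ≤ #T * (d + 1) := by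
  induction B using Finset.strongInduction with
  | H B ih =>
  rcases B.eq_empty_or_nonempty with rfl | ⟨u, hu⟩
  · exact ⟨∅, empty_subset _, by simp, by simp⟩
  have hsub : B.filter (G.Adj u) ⊂ B :=
    filter_ssubset.2 ⟨u, hu, G.irrefl⟩
  obtain ⟨T, hTB, hT, hcard⟩ := ih _ hsub fun v hv =>
    (card_le_card (filter_subset_filter _ (filter_subset _ _))).trans (hB v (mem_filter.1 hv).1)
  have hrest : #(B.filter fun v => ¬G.Adj u v) ≤ d + 1 := by
    calc #(B.filter fun v => ¬G.Adj u v) ≤ #(insert u (B.filter (Gᶜ.Adj u))) := by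
          refine card_le_card fun v hv => ?_
          rw [mem_insert, mem_filter, compl_adj]
          rw [mem_filter] at hv
          by_cases huv : u = v
          · exact Or.inl huv.symm
          · exact Or.inr ⟨hv.1, huv, hv.2⟩
      _ ≤ d + 1 := (card_insert_le _ _).trans (Nat.succ_le_succ (hB u hu))
  have huT : u ∉ T := fun h => G.irrefl (mem_filter.1 (hTB h)).2
  refine ⟨insert u T, insert_subset hu (hTB.trans hsub.subset), ?_, ?_⟩
  · rw [coe_insert]
    exact hT.insert fun v hv _ => (mem_filter.1 (hTB hv)).2
  · have hsplit := card_filter_add_card_filter_not (s := B) (G.Adj u)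
    rw [card_insert_of_notMem huT]
    nlinarith

end SimpleGraph

lemma rpow_le_two_mul_of_le_mul_rpow_add_one {x t p q : ℝ} (hx : 1 ≤ x) (hq : 0 ≤ q)
    (hpq : p + q = 1) (h : x ≤ t * (x ^ q + 1)) : x ^ p ≤ 2 * t := by
  have hxq : 1 ≤ x ^ q := Real.one_le_rpow hx hq
  have hsplit : x ^ p * x ^ q = x := by
    rw [← Real.rpow_add (by linarith), hpq, Real.rpow_one]
  have ht : 0 ≤ t := by
    by_contra! ht
    nlinarith
  refine le_of_mul_le_mul_right ?_ (by linarith : 0 < x ^ q)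
  nlinarith

universe u

open SimpleGraph

/-- Indexed by `k = m - 1`, so that the exponent `1 / k` involves no truncated subtraction. -/
def HasHomogeneousPowerBound (k f : ℕ) : Prop :=
  ∃ c : ℝ, 0 < c ∧ ∀ {V : Type u} [DecidableEq V] (G : SimpleGraph V) (A : Finset V),
    G.IsEdgeCountFreeOn (k + 1) f A →
      ∃ T ⊆ A, G.IsHomogeneous (T : Set V) ∧ c * (#A : ℝ) ^ ((1 : ℝ) / k) ≤ #T

namespace HasHomogeneousPowerBound

lemma one_zero : HasHomogeneousPowerBound.{u} 1 0 :=
  ⟨1, one_pos, fun _ A hA => ⟨A, subset_rfl, Or.inl hA.isClique, by simp⟩⟩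

lemma of_compl {k f : ℕ} (hf : f ≤ (k + 1).choose 2)
    (h : HasHomogeneousPowerBound.{u} k ((k + 1).choose 2 - f)) :
    HasHomogeneousPowerBound.{u} k f := by
  obtain ⟨c, hc, hbound⟩ := h
  refine ⟨c, hc, fun G A hA => ?_⟩
  obtain ⟨T, hTA, hT, hcard⟩ := hbound Gᶜ A (hA.compl hf)
  exact ⟨T, hTA, hT.of_compl, hcard⟩

lemma succ {k f : ℕ} (hk : k ≠ 0) (h : HasHomogeneousPowerBound.{u} k f) :
    HasHomogeneousPowerBound.{u} (k + 1) f := by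
  obtain ⟨c, hc, hbound⟩ := h
  refine ⟨min c (1 / 2), lt_min hc one_half_pos, fun G A hA => ?_⟩
  set N : ℝ := (#A : ℝ)
  set D : ℝ := N ^ ((k : ℝ) / (k + 1))
  rw [Nat.cast_add_one]
  by_cases hbig : ∃ u ∈ A, D ≤ #(A.filter (Gᶜ.Adj u))
  · obtain ⟨u, hu, hD⟩ := hbig
    obtain ⟨T, hTA, hT, hcard⟩ := hbound G _ (hA.filter_compl_adj hu)
    refine ⟨T, hTA.trans (filter_subset _ _), hT, le_trans ?_ hcard⟩
    have hDk : D ^ ((1 : ℝ) / k) = N ^ ((1 : ℝ) / (k + 1)) := by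
      rw [← Real.rpow_mul (by positivity)]
      congr 1
      field_simp
    calc min c (1 / 2) * N ^ ((1 : ℝ) / (k + 1)) ≤ c * D ^ ((1 : ℝ) / k) := by
          rw [hDk]
          gcongr
          exact min_le_left _ _
      _ ≤ c * (#(A.filter (Gᶜ.Adj u)) : ℝ) ^ ((1 : ℝ) / k) := by gcongr
  · push Not at hbig
    obtain ⟨T, hTA, hT, hcard⟩ := exists_isClique_card_le_mul ⌊D⌋₊ A fun u hu =>
      Nat.le_floor (hbig u hu).le
    refine ⟨T, hTA, Or.inl hT, ?_⟩
    rcases A.eq_empty_or_nonempty with rfl | hAne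
    · rw [show N = 0 by simp [N], Real.zero_rpow (by positivity), mul_zero]
      positivity
    have hN : N ≤ #T * (D + 1) := by
      calc N ≤ (#T : ℝ) * (⌊D⌋₊ + 1) := by simp only [N]; exact_mod_cast hcard
        _ ≤ #T * (D + 1) := by gcongr; exact Nat.floor_le (by positivity)
    have hpow := rpow_le_two_mul_of_le_mul_rpow_add_one (p := 1 / (k + 1))
      (by simpa [N] using hAne.card_pos) (by positivity) (by field_simp; ring) hN
    calc min c (1 / 2) * N ^ ((1 : ℝ) / (k + 1)) ≤ 1 / 2 * N ^ ((1 : ℝ) / (k + 1)) := by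
          gcongr; exact min_le_right _ _
      _ ≤ #T := by linarith

end HasHomogeneousPowerBound

theorem hasHomogeneousPowerBound {k f : ℕ} (hk : 1 ≤ k) (hf : f ≤ (k + 1).choose 2) :
    HasHomogeneousPowerBound.{u} k f := by
  induction k, hk using Nat.le_induction generalizing f with
  | base =>
    obtain rfl | rfl : f = 0 ∨ f = 1 := by simp at hf; omega
    · exact .one_zero
    · exact .of_compl hf .one_zero
  | succ k hk ih =>
    by_cases hsmall : f ≤ (k + 1).choose 2
    · exact (ih hsmall).succ (by omega)
    have hchoose : (k + 1 + 1).choose 2 = (k + 1).choose 2 + (k + 1) := by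
      rw [Nat.choose_succ_succ, Nat.choose_one_right, add_comm]
    have hk_le : k ≤ (k + 1).choose 2 := by
      simp [Nat.choose_succ_succ]
    exact .of_compl hf ((ih (by omega)).succ (by omega))

theorem stmt_0 (m f : ℕ) (hm : 2 ≤ m) (hf : f ≤ m.choose 2) :
    ∃ c : ℝ, 0 < c ∧ ∀ (n : ℕ) (G : SimpleGraph (Fin n)),
      (∀ S : Finset (Fin n), S.card = m → inducedEdgeCount G S ≠ f) →
      ∃ T : Finset (Fin n), (G.IsClique ↑T ∨ Gᶜ.IsClique ↑T) ∧
        c * (n : ℝ) ^ ((1 : ℝ) / ((m : ℝ) - 1)) ≤ T.card := by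
  obtain ⟨k, rfl⟩ : ∃ k, m = k + 1 := ⟨m - 1, by omega⟩
  obtain ⟨c, hc, hbound⟩ := hasHomogeneousPowerBound.{0} (by omega : 1 ≤ k) hf
  refine ⟨c, hc, fun n G hG => ?_⟩
  obtain ⟨T, -, hT, hcard⟩ := hbound G univ fun S _ => hG S
  refine ⟨T, hT, ?_⟩
  simpa using hcard
end

section
/- A 3-uniform hypergraph H is {(4,2),(4,4)}-free (no 4 vertices span exactly 2 edges and no 4 vertices span exactly 4 edges) if and only if every tight component of H is the edge set of a star. -/
open Finset

/-- Number of edges of the 3-graph `H` spanned by the vertex set `X`. -/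
def spanCount {V : Type*} [DecidableEq V] (H : Finset (Finset V)) (X : Finset V) : ℕ :=
  ((X.powersetCard 3).filter (· ∈ H)).card

/-- One step of a tight walk within the edge set `H`. -/
def tightStep {V : Type*} [DecidableEq V] (H : Finset (Finset V)) (e f : Finset V) : Prop :=
  e ∈ H ∧ f ∈ H ∧ (e ∩ f).card = 2

/-- Two edges are tightly connected in `H` if they are joined by a tight walk. -/
def tightConn {V : Type*} [DecidableEq V] (H : Finset (Finset V)) : Finset V → Finset V → Prop :=
  Relation.ReflTransGen (tightStep H)

/-- `C` is a tight component of `H`: a maximal set of edges any two of which are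
joined by a tight walk. -/
def IsTightComponent {V : Type*} [DecidableEq V] (H C : Finset (Finset V)) : Prop :=
  C.Nonempty ∧ C ⊆ H ∧
    (∀ e ∈ C, ∀ f ∈ H, tightConn H e f → f ∈ C) ∧
    (∀ e ∈ C, ∀ f ∈ C, tightConn H e f)

/-- `C` is the edge set of a star `(v, S)`. -/
def IsStarEdgeSet {V : Type*} [DecidableEq V] (C : Finset (Finset V)) : Prop :=
  ∃ (v : V) (S : Finset V), v ∉ S ∧
    ∀ t : Finset V, t ∈ C ↔ ∃ x ∈ S, ∃ y ∈ S, x ≠ y ∧ t = {v, x, y}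

set_option linter.unusedSectionVars false
set_option linter.unusedTactic false

namespace StarProofAux
variable {V : Type*} [DecidableEq V]

lemma ne_fin {t1 t2 : Finset V} {x : V} (h1 : x ∈ t1) (h2 : x ∉ t2) : t1 ≠ t2 :=
  fun h => h2 (h ▸ h1)

lemma trip_perm {a b c a' b' c' : V}
    (h : ∀ x : V, (x = a ∨ x = b ∨ x = c) ↔ (x = a' ∨ x = b' ∨ x = c')) :
    ({a,b,c} : Finset V) = {a',b',c'} := by
  ext x; simp only [mem_insert, mem_singleton]; exact h x

lemma quad_perm {a b c d a' b' c' d' : V}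
    (h : ∀ x : V, (x = a ∨ x = b ∨ x = c ∨ x = d) ↔ (x = a' ∨ x = b' ∨ x = c' ∨ x = d')) :
    ({a,b,c,d} : Finset V) = {a',b',c',d'} := by
  ext x; simp only [mem_insert, mem_singleton]; exact h x

lemma mem_perm {H : Finset (Finset V)} {a b c a' b' c' : V}
    (h : ({a,b,c} : Finset V) ∈ H)
    (hp : ∀ x : V, (x = a' ∨ x = b' ∨ x = c') ↔ (x = a ∨ x = b ∨ x = c)) :
    ({a',b',c'} : Finset V) ∈ H := by rw [trip_perm hp]; exact h

lemma notMem_perm {H : Finset (Finset V)} {a b c a' b' c' : V}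
    (h : ({a,b,c} : Finset V) ∉ H)
    (hp : ∀ x : V, (x = a' ∨ x = b' ∨ x = c') ↔ (x = a ∨ x = b ∨ x = c)) :
    ({a',b',c'} : Finset V) ∉ H := by rw [trip_perm hp]; exact h

lemma triple_card {a b c : V} (hab : a ≠ b) (hac : a ≠ c) (hbc : b ≠ c) :
    ({a, b, c} : Finset V).card = 3 := by
  rw [card_insert_of_notMem (by simp [hab, hac]), card_insert_of_notMem (by simp [hbc]),
    card_singleton]

lemma distinct_of_triple_card {a b c : V} (h : ({a,b,c} : Finset V).card = 3) :
    a ≠ b ∧ a ≠ c ∧ b ≠ c := by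
  refine ⟨?_, ?_, ?_⟩ <;> rintro rfl
  · rw [show ({a,a,c} : Finset V) = {a,c} from by ext x; simp; try tauto] at h
    have : ({a,c} : Finset V).card ≤ 2 := le_trans (card_insert_le _ _) (by simp)
    omega
  · rw [show ({a,b,a} : Finset V) = {a,b} from by ext x; simp; try tauto] at h
    have : ({a,b} : Finset V).card ≤ 2 := le_trans (card_insert_le _ _) (by simp)
    omega
  · rw [show ({a,b,b} : Finset V) = {a,b} from by ext x; simp; try tauto] at h
    have : ({a,b} : Finset V).card ≤ 2 := le_trans (card_insert_le _ _) (by simp)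
    omega

lemma quad_card {p q r s : V} (hpq : p ≠ q) (hpr : p ≠ r) (hps : p ≠ s)
    (hqr : q ≠ r) (hqs : q ≠ s) (hrs : r ≠ s) : ({p,q,r,s} : Finset V).card = 4 := by
  rw [card_insert_of_notMem (by simp [hpq, hpr, hps]),
      card_insert_of_notMem (by simp [hqr, hqs]),
      card_insert_of_notMem (by simp [hrs]), card_singleton]

lemma notMem_triple {x a b c : V} (h1 : x ≠ a) (h2 : x ≠ b) (h3 : x ≠ c) :
    x ∉ ({a,b,c} : Finset V) := by simp [h1, h2, h3]

lemma erase_quad₁ {p q r s : V} (h1 : p ≠ q) (h2 : p ≠ r) (h3 : p ≠ s) :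
    ({p,q,r,s} : Finset V).erase p = {q,r,s} := by
  ext y
  simp only [mem_erase, mem_insert, mem_singleton]
  constructor
  · rintro ⟨hy, rfl | h | h | h⟩ <;> tauto
  · rintro (rfl | rfl | rfl)
    · exact ⟨fun h => h1 h.symm, Or.inr (Or.inl rfl)⟩
    · exact ⟨fun h => h2 h.symm, Or.inr (Or.inr (Or.inl rfl))⟩
    · exact ⟨fun h => h3 h.symm, Or.inr (Or.inr (Or.inr rfl))⟩

lemma subset_quad {p q r s : V} (hpq : p ≠ q) (hpr : p ≠ r) (hps : p ≠ s)
    (hqr : q ≠ r) (hqs : q ≠ s) (hrs : r ≠ s) {t : Finset V}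
    (hts : t ⊆ {p,q,r,s}) (htc : t.card = 3) :
    t = {q,r,s} ∨ t = {p,r,s} ∨ t = {p,q,s} ∨ t = {p,q,r} := by
  have hX : ({p,q,r,s} : Finset V).card = 4 := quad_card hpq hpr hps hqr hqs hrs
  have hmiss : ∃ x ∈ ({p,q,r,s} : Finset V), x ∉ t := by
    by_contra hcon; push_neg at hcon
    have := card_le_card hcon; omega
  obtain ⟨x, hxX, hxt⟩ := hmiss
  have hsub : t ⊆ ({p,q,r,s} : Finset V).erase x :=
    fun y hy => mem_erase.2 ⟨fun h => hxt (h ▸ hy), hts hy⟩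
  have hcard : (({p,q,r,s} : Finset V).erase x).card = 3 := by
    rw [card_erase_of_mem hxX, hX]
  have ht' : t = ({p,q,r,s} : Finset V).erase x :=
    eq_of_subset_of_card_le hsub (by omega)
  simp only [mem_insert, mem_singleton] at hxX
  rcases hxX with rfl | rfl | rfl | rfl
  · left; rw [ht', erase_quad₁ hpq hpr hps]
  · right; left
    rw [ht', quad_perm (a' := x) (b' := p) (c' := r) (d' := s) (fun y => by tauto),
      erase_quad₁ (Ne.symm hpq) hqr hqs]
  · right; right; left
    rw [ht', quad_perm (a' := x) (b' := p) (c' := q) (d' := s) (fun y => by tauto),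
      erase_quad₁ (Ne.symm hpr) (Ne.symm hqr) hrs]
  · right; right; right
    rw [ht', quad_perm (a' := x) (b' := p) (c' := q) (d' := r) (fun y => by tauto),
      erase_quad₁ (Ne.symm hps) (Ne.symm hqs) (Ne.symm hrs)]
  done

set_option maxHeartbeats 1000000 in
lemma exactOne (H : Finset (Finset V))
    (hfree : ∀ X : Finset V, X.card = 4 → spanCount H X ≠ 2 ∧ spanCount H X ≠ 4)
    {p q r s : V} (hpq : p ≠ q) (hpr : p ≠ r) (hps : p ≠ s) (hqr : q ≠ r) (hqs : q ≠ s)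
    (hrs : r ≠ s) (h1 : ({p,q,r} : Finset V) ∈ H) (h2 : ({p,q,s} : Finset V) ∈ H) :
    (({p,r,s} : Finset V) ∈ H ∧ ({q,r,s} : Finset V) ∉ H) ∨
      (({q,r,s} : Finset V) ∈ H ∧ ({p,r,s} : Finset V) ∉ H) := by
  classical
  obtain ⟨hn2, hn4⟩ := hfree ({p,q,r,s} : Finset V) (quad_card hpq hpr hps hqr hqs hrs)
  set X : Finset V := {p,q,r,s} with hXdef
  set F := (X.powersetCard 3).filter (· ∈ H) with hFdef
  have hspan : spanCount H X = F.card := rfl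
  have hmemF : ∀ t : Finset V, t ∈ F ↔ (t ⊆ X ∧ t.card = 3) ∧ t ∈ H := by
    intro t; rw [hFdef, mem_filter, mem_powersetCard]
  have he : ({p,q,r} : Finset V) ∈ F := (hmemF _).2
    ⟨⟨by intro x hx; simp only [hXdef, mem_insert, mem_singleton] at hx ⊢; tauto,
      triple_card hpq hpr hqr⟩, h1⟩
  have hf : ({p,q,s} : Finset V) ∈ F := (hmemF _).2
    ⟨⟨by intro x hx; simp only [hXdef, mem_insert, mem_singleton] at hx ⊢; tauto,
      triple_card hpq hps hqs⟩, h2⟩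
  by_cases hA : ({p,r,s} : Finset V) ∈ H
  · by_cases hB : ({q,r,s} : Finset V) ∈ H
    · exfalso; apply hn4
      have hta : ({q,r,s} : Finset V) ∈ F := (hmemF _).2
        ⟨⟨by intro x hx; simp only [hXdef, mem_insert, mem_singleton] at hx ⊢; tauto,
          triple_card hqr hqs hrs⟩, hB⟩
      have htb : ({p,r,s} : Finset V) ∈ F := (hmemF _).2
        ⟨⟨by intro x hx; simp only [hXdef, mem_insert, mem_singleton] at hx ⊢; tauto,
          triple_card hpr hps hrs⟩, hA⟩
      have hsub4 : ({({q,r,s} : Finset V), {p,r,s}, {p,q,s}, {p,q,r}} : Finset (Finset V)) ⊆ F := by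
        intro t ht; simp only [mem_insert, mem_singleton] at ht
        rcases ht with rfl | rfl | rfl | rfl <;> assumption
      have hc4 : ({({q,r,s} : Finset V), {p,r,s}, {p,q,s}, {p,q,r}} : Finset (Finset V)).card = 4 :=
        quad_card
          (ne_fin (show q ∈ ({q,r,s}:Finset V) by simp) (notMem_triple hpq.symm hqr hqs))
          (ne_fin (show r ∈ ({q,r,s}:Finset V) by simp) (notMem_triple hpr.symm hqr.symm hrs))
          (ne_fin (show s ∈ ({q,r,s}:Finset V) by simp) (notMem_triple hps.symm hqs.symm hrs.symm))
          (ne_fin (show r ∈ ({p,r,s}:Finset V) by simp) (notMem_triple hpr.symm hqr.symm hrs))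
          (ne_fin (show s ∈ ({p,r,s}:Finset V) by simp) (notMem_triple hps.symm hqs.symm hrs.symm))
          (ne_fin (show s ∈ ({p,q,s}:Finset V) by simp) (notMem_triple hps.symm hqs.symm hrs.symm))
      have hge : 4 ≤ F.card := hc4 ▸ card_le_card hsub4
      have hle : F.card ≤ 4 := by
        have h1 : F.card ≤ (X.powersetCard 3).card := card_filter_le _ _
        have h2 : (X.powersetCard 3).card = 4 := by
          rw [card_powersetCard, quad_card hpq hpr hps hqr hqs hrs]
          rfl
        omega
      rw [hspan]; omega
    · exact Or.inl ⟨hA, hB⟩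
  · by_cases hB : ({q,r,s} : Finset V) ∈ H
    · exact Or.inr ⟨hB, hA⟩
    · exfalso; apply hn2
      have hFeq : F = ({({p,q,s} : Finset V), {p,q,r}} : Finset (Finset V)) := by
        apply Subset.antisymm
        · intro t htF
          obtain ⟨⟨hts, htc⟩, htH⟩ := (hmemF t).1 htF
          rcases subset_quad hpq hpr hps hqr hqs hrs hts htc with rfl | rfl | rfl | rfl
          · exact absurd htH hB
          · exact absurd htH hA
          · simp
          · simp
        · intro t ht; simp only [mem_insert, mem_singleton] at ht
          rcases ht with rfl | rfl <;> assumption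
      rw [hspan, hFeq, card_insert_of_notMem, card_singleton]
      simp only [mem_singleton]
      exact ne_fin (show s ∈ ({p,q,s}:Finset V) by simp) (notMem_triple hps.symm hqs.symm hrs.symm)

lemma eq_triple {t : Finset V} {x y z : V} (ht : t.card = 3) (hx : x ∈ t) (hy : y ∈ t)
    (hz : z ∈ t) (hxy : x ≠ y) (hxz : x ≠ z) (hyz : y ≠ z) : t = {x,y,z} := by
  refine (eq_of_subset_of_card_le ?_ ?_).symm
  · intro u hu; simp only [mem_insert, mem_singleton] at hu
    rcases hu with rfl | rfl | rfl <;> assumption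
  · rw [ht, triple_card hxy hxz hyz]

lemma inter2 {e f : Finset V} (he : e.card = 3) (hf : f.card = 3) {x y : V}
    (hxe : x ∈ e) (hxf : x ∈ f) (hye : y ∈ e) (hyf : y ∈ f) (hxy : x ≠ y) (hef : e ≠ f) :
    (e ∩ f).card = 2 := by
  have hsub : ({x,y} : Finset V) ⊆ e ∩ f := by
    intro u hu; simp only [mem_insert, mem_singleton] at hu
    rcases hu with rfl | rfl <;> exact mem_inter.2 ⟨by assumption, by assumption⟩
  have h2 : 2 ≤ (e ∩ f).card := by
    have hp2 : ({x,y} : Finset V).card = 2 := by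
      rw [card_insert_of_notMem (by simp [hxy]), card_singleton]
    have := card_le_card hsub; omega
  have h3le : (e ∩ f).card ≤ 3 := le_trans (card_le_card inter_subset_left) (le_of_eq he)
  have hne3 : (e ∩ f).card ≠ 3 := by
    intro h3eq
    have heq : e ∩ f = e := eq_of_subset_of_card_le inter_subset_left (by omega)
    have hef2 : e ⊆ f := by rw [← heq]; exact inter_subset_right
    exact hef (eq_of_subset_of_card_le hef2 (by omega))
  omega

lemma step_struct {f g : Finset V} (hf : f.card = 3) (hg : g.card = 3)
    (h : (f ∩ g).card = 2) :
    ∃ x y c d : V, x ≠ y ∧ x ≠ c ∧ x ≠ d ∧ y ≠ c ∧ y ≠ d ∧ c ≠ d ∧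
      c ∉ g ∧ d ∉ f ∧ f = {x,y,c} ∧ g = {x,y,d} := by
  obtain ⟨x, y, hxy, hpair⟩ := card_eq_two.mp h
  have hxfg : x ∈ f ∩ g := by rw [hpair]; simp
  have hyfg : y ∈ f ∩ g := by rw [hpair]; simp
  have hxf := (mem_inter.mp hxfg).1
  have hxg := (mem_inter.mp hxfg).2
  have hyf := (mem_inter.mp hyfg).1
  have hyg := (mem_inter.mp hyfg).2
  have hcf : (f \ (f ∩ g)).card = 1 := by rw [card_sdiff_of_subset inter_subset_left, hf, h]
  obtain ⟨c, hc⟩ := card_eq_one.mp hcf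
  have hcmem : c ∈ f \ (f ∩ g) := by rw [hc]; simp
  have hgd : (g \ (f ∩ g)).card = 1 := by
    rw [card_sdiff_of_subset]
    · rw [hg, h]
    · exact inter_subset_right
  obtain ⟨d, hd⟩ := card_eq_one.mp hgd
  have hdmem : d ∈ g \ (f ∩ g) := by rw [hd]; simp
  have hcF : c ∈ f := (mem_sdiff.mp hcmem).1
  have hcN : c ∉ f ∩ g := (mem_sdiff.mp hcmem).2
  have hdG : d ∈ g := (mem_sdiff.mp hdmem).1
  have hdN : d ∉ f ∩ g := (mem_sdiff.mp hdmem).2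
  have hcg : c ∉ g := fun hcg => hcN (mem_inter.2 ⟨hcF, hcg⟩)
  have hdf : d ∉ f := fun hdf => hdN (mem_inter.2 ⟨hdf, hdG⟩)
  have hxc : x ≠ c := fun h' => hcN (h' ▸ hxfg)
  have hyc : y ≠ c := fun h' => hcN (h' ▸ hyfg)
  have hxd : x ≠ d := fun h' => hdN (h' ▸ hxfg)
  have hyd : y ≠ d := fun h' => hdN (h' ▸ hyfg)
  have hcd : c ≠ d := fun h' => hcg (h' ▸ hdG)
  have hfeq : f = {x,y,c} := by
    have h1 : (f ∩ g) ∪ (f \ (f ∩ g)) = f := union_sdiff_of_subset inter_subset_left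
    rw [hc, hpair] at h1
    rw [← h1]; ext u
    simp only [mem_union, mem_insert, mem_singleton]; tauto
  have hgeq : g = {x,y,d} := by
    have h1 : (f ∩ g) ∪ (g \ (f ∩ g)) = g := union_sdiff_of_subset inter_subset_right
    rw [hd, hpair] at h1
    rw [← h1]; ext u
    simp only [mem_union, mem_insert, mem_singleton]; tauto
  exact ⟨x, y, c, d, hxy, hxc, hxd, hyc, hyd, hcd, hcg, hdf, hfeq, hgeq⟩

lemma pair_match {x y p1 p2 d : V} (h12 : p1 ≠ p2) (h1 : p1 = x ∨ p1 = y) (h2 : p2 = x ∨ p2 = y) :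
    ({x,y,d} : Finset V) = {p1,p2,d} := by
  rcases h1 with rfl | rfl <;> rcases h2 with rfl | rfl <;>
    first
      | rfl
      | exact absurd rfl h12
      | exact absurd rfl (Ne.symm h12)
      | exact trip_perm (fun t => by clear * -; tauto)

def IsApex (H : Finset (Finset V)) (v : V) (e f : Finset V) : Prop :=
  ∃ w a b : V, v ≠ w ∧ v ≠ a ∧ v ≠ b ∧ w ≠ a ∧ w ≠ b ∧ a ≠ b ∧
    e = {v,w,a} ∧ f = {v,w,b} ∧ e ∈ H ∧ f ∈ H ∧
    ({v,a,b} : Finset V) ∈ H ∧ ({w,a,b} : Finset V) ∉ H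

lemma IsApex.symm {H : Finset (Finset V)} {v : V} {e f : Finset V}
    (h : IsApex H v e f) : IsApex H v f e := by
  obtain ⟨w, a, b, hvw, hva, hvb, hwa, hwb, hab, he, hf, heH, hfH, h1, h2⟩ := h
  exact ⟨w, b, a, hvw, hvb, hva, hwb, hwa, hab.symm, hf, he, hfH, heH,
    mem_perm h1 (fun t => by clear * -; tauto), notMem_perm h2 (fun t => by clear * -; tauto)⟩

lemma IsApex.mem_snd {H : Finset (Finset V)} {v : V} {e f : Finset V}
    (h : IsApex H v e f) : v ∈ f := by
  obtain ⟨w, a, b, _, _, _, _, _, _, _, hf, _⟩ := h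
  rw [hf]; simp

lemma apex_exists (H : Finset (Finset V))
    (hfree : ∀ X : Finset V, X.card = 4 → spanCount H X ≠ 2 ∧ spanCount H X ≠ 4)
    (h3 : ∀ e ∈ H, e.card = 3) {e f : Finset V}
    (hst : tightStep H e f) : ∃ v, IsApex H v e f := by
  obtain ⟨heH, hfH, hef⟩ := hst
  obtain ⟨x, y, c, d, hxy, hxc, hxd, hyc, hyd, hcd, hcg, hdf, hfe, hge⟩ :=
    step_struct (h3 e heH) (h3 f hfH) hef
  have h1 : ({x,y,c} : Finset V) ∈ H := hfe ▸ heH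
  have h2 : ({x,y,d} : Finset V) ∈ H := hge ▸ hfH
  rcases exactOne H hfree hxy hxc hxd hyc hyd hcd h1 h2 with ⟨hP, hQ⟩ | ⟨hP, hQ⟩
  · exact ⟨x, y, c, d, hxy, hxc, hxd, hyc, hyd, hcd, hfe, hge, heH, hfH, hP, hQ⟩
  · refine ⟨y, x, c, d, hxy.symm, hyc, hyd, hxc, hxd, hcd, ?_, ?_, heH, hfH, hP, hQ⟩
    · rw [hfe]; exact trip_perm (fun t => by clear * -; tauto)
    · rw [hge]; exact trip_perm (fun t => by clear * -; tauto)

lemma memp (a' b' c' : V) {H : Finset (Finset V)} {a b c : V}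
    (h : ({a,b,c} : Finset V) ∈ H)
    (hp : ∀ x : V, (x = a' ∨ x = b' ∨ x = c') ↔ (x = a ∨ x = b ∨ x = c)) :
    ({a',b',c'} : Finset V) ∈ H := by rw [trip_perm hp]; exact h

lemma notmemp (a' b' c' : V) {H : Finset (Finset V)} {a b c : V}
    (h : ({a,b,c} : Finset V) ∉ H)
    (hp : ∀ x : V, (x = a' ∨ x = b' ∨ x = c') ↔ (x = a ∨ x = b ∨ x = c)) :
    ({a',b',c'} : Finset V) ∉ H := by rw [trip_perm hp]; exact h

set_option maxHeartbeats 1000000 in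
lemma apex_step (H : Finset (Finset V))
    (hfree : ∀ X : Finset V, X.card = 4 → spanCount H X ≠ 2 ∧ spanCount H X ≠ 4)
    (h3 : ∀ e ∈ H, e.card = 3) {v : V} {e f g : Finset V}
    (hap : IsApex H v e f) (hst : tightStep H f g) : IsApex H v f g := by
  obtain ⟨w, a, b, hvw, hva, hvb, hwa, hwb, hab, he_eq, hf_eq, heH, hfH, hvab, hwab⟩ := hap
  obtain ⟨_, hgH, hfg⟩ := hst
  obtain ⟨x, y, c, d, hxy, hxc, hxd, hyc, hyd, hcd, hcg, hdf, hf_eq2, hg_eq⟩ :=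
    step_struct (h3 f hfH) (h3 g hgH) hfg
  have hvf : v ∈ f := by rw [hf_eq]; simp
  have hwf : w ∈ f := by rw [hf_eq]; simp
  have hbf : b ∈ f := by rw [hf_eq]; simp
  have hdv : d ≠ v := fun h => hdf (h ▸ hvf)
  have hdw : d ≠ w := fun h => hdf (h ▸ hwf)
  have hdb : d ≠ b := fun h => hdf (h ▸ hbf)
  have hcv3 : c = v ∨ c = w ∨ c = b := by
    have hcf : c ∈ f := by rw [hf_eq2]; simp
    rw [hf_eq] at hcf; simpa using hcf
  have hvxyc : v = x ∨ v = y ∨ v = c := by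
    have h' := hvf; rw [hf_eq2] at h'; simpa using h'
  have hwxyc : w = x ∨ w = y ∨ w = c := by
    have h' := hwf; rw [hf_eq2] at h'; simpa using h'
  have hbxyc : b = x ∨ b = y ∨ b = c := by
    have h' := hbf; rw [hf_eq2] at h'; simpa using h'
  have hwv := Ne.symm hvw; have hav := Ne.symm hva; have hbv := Ne.symm hvb
  have haw := Ne.symm hwa; have hbw := Ne.symm hwb; have hba := Ne.symm hab
  have hvd := Ne.symm hdv; have hwd := Ne.symm hdw; have hbd := Ne.symm hdb
  have heH' : ({v,w,a} : Finset V) ∈ H := he_eq ▸ heH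
  have hfH' : ({v,w,b} : Finset V) ∈ H := hf_eq ▸ hfH
  rcases hcv3 with hcv | hcv | hcv
  · -- shared pair {w,b} : always contradiction
    exfalso
    have hwxy : w = x ∨ w = y := by
      rcases hwxyc with h | h | h
      · exact Or.inl h
      · exact Or.inr h
      · exact absurd (h.trans hcv) hwv
    have hbxy : b = x ∨ b = y := by
      rcases hbxyc with h | h | h
      · exact Or.inl h
      · exact Or.inr h
      · exact absurd (h.trans hcv) hbv
    have hg' : g = {w,b,d} := by rw [hg_eq]; exact pair_match hwb hwxy hbxy
    have hgH' : ({w,b,d} : Finset V) ∈ H := hg' ▸ hgH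
    by_cases hda : d = a
    · rw [hda] at hgH'
      exact hwab (memp w a b hgH' (fun t => by clear * -; tauto))
    · have had := Ne.symm hda
      rcases exactOne H hfree hwb hwv hwd hbv hbd hvd
          (memp w b v hfH' (fun t => by clear * -; tauto)) hgH' with ⟨hP, hQ⟩ | ⟨hP, hQ⟩
      · have hvwd : ({v,w,d} : Finset V) ∈ H := memp v w d hP (fun t => by clear * -; tauto)
        have hnvbd : ({v,b,d} : Finset V) ∉ H := notmemp v b d hQ (fun t => by clear * -; tauto)
        rcases exactOne H hfree hvw hva hvd hwa hwd had heH' hvwd with ⟨hR, hS⟩ | ⟨hR, hS⟩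
        · rcases exactOne H hfree hva hvb hvd hab had hbd hvab hR with ⟨hT, _⟩ | ⟨hT, _⟩
          · exact hnvbd hT
          · rcases exactOne H hfree hbd hba hbw hda hdw haw
                (memp b d a hT (fun t => by clear * -; tauto)) (memp b d w hgH' (fun t => by clear * -; tauto))
              with ⟨hU, _⟩ | ⟨hU, _⟩
            · exact hwab (memp w a b hU (fun t => by clear * -; tauto))
            · exact hS (memp w a d hU (fun t => by clear * -; tauto))
        · rcases exactOne H hfree hwd hwa hwb hda hdb hab
              (memp w d a hR (fun t => by clear * -; tauto)) (memp w d b hgH' (fun t => by clear * -; tauto))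
            with ⟨hT, _⟩ | ⟨hT, _⟩
          · exact hwab hT
          · rcases exactOne H hfree hab hav had hbv hbd hvd
                (memp a b v hvab (fun t => by clear * -; tauto)) (memp a b d hT (fun t => by clear * -; tauto))
              with ⟨hU, _⟩ | ⟨hU, _⟩
            · exact hS (memp v a d hU (fun t => by clear * -; tauto))
            · exact hnvbd (memp v b d hU (fun t => by clear * -; tauto))
      · have hvbd : ({v,b,d} : Finset V) ∈ H := memp v b d hP (fun t => by clear * -; tauto)
        have hnvwd : ({v,w,d} : Finset V) ∉ H := notmemp v w d hQ (fun t => by clear * -; tauto)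
        rcases exactOne H hfree hvb hva hvd hba hbd had
            (memp v b a hvab (fun t => by clear * -; tauto)) hvbd with ⟨hR, hS⟩ | ⟨hR, hS⟩
        · rcases exactOne H hfree hva hvw hvd haw had hwd
              (memp v a w heH' (fun t => by clear * -; tauto)) hR with ⟨hT, _⟩ | ⟨hT, _⟩
          · exact hnvwd hT
          · rcases exactOne H hfree hwd hwa hwb hda hdb hab
                (memp w d a hT (fun t => by clear * -; tauto)) (memp w d b hgH' (fun t => by clear * -; tauto))
              with ⟨hU, _⟩ | ⟨hU, _⟩
            · exact hwab hU
            · exact hS (memp b a d hU (fun t => by clear * -; tauto))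
        · rcases exactOne H hfree hbd hba hbw hda hdw haw
              (memp b d a hR (fun t => by clear * -; tauto)) (memp b d w hgH' (fun t => by clear * -; tauto))
            with ⟨hT, _⟩ | ⟨hT, _⟩
          · exact hwab (memp w a b hT (fun t => by clear * -; tauto))
          · rcases exactOne H hfree hwa hwv hwd hav had hvd
                (memp w a v heH' (fun t => by clear * -; tauto)) (memp w a d hT (fun t => by clear * -; tauto))
              with ⟨hU, _⟩ | ⟨hU, _⟩
            · exact hnvwd (memp v w d hU (fun t => by clear * -; tauto))
            · exact hS (memp v a d hU (fun t => by clear * -; tauto))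
  · -- shared pair {v,b}
    have hvxy : v = x ∨ v = y := by
      rcases hvxyc with h | h | h
      · exact Or.inl h
      · exact Or.inr h
      · exact absurd (h.trans hcv) hvw
    have hbxy : b = x ∨ b = y := by
      rcases hbxyc with h | h | h
      · exact Or.inl h
      · exact Or.inr h
      · exact absurd (h.trans hcv) hbw
    have hg' : g = {v,b,d} := by rw [hg_eq]; exact pair_match hvb hvxy hbxy
    have hgH' : ({v,b,d} : Finset V) ∈ H := hg' ▸ hgH
    by_cases hda : d = a
    · rw [hda] at hg'
      exact ⟨b, w, a, hvb, hvw, hva, hbw, hba, hwa,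
        by rw [hf_eq]; exact trip_perm (fun t => by clear * -; tauto), hg', hfH, hgH, heH',
        notmemp b w a hwab (fun t => by clear * -; tauto)⟩
    · have had := Ne.symm hda
      rcases exactOne H hfree hvb hvw hvd hbw hbd hwd
          (memp v b w hfH' (fun t => by clear * -; tauto)) hgH' with ⟨hP, hQ⟩ | ⟨hP, hQ⟩
      · exact ⟨b, w, d, hvb, hvw, hvd, hbw, hbd, hwd,
          by rw [hf_eq]; exact trip_perm (fun t => by clear * -; tauto), hg', hfH, hgH, hP, hQ⟩
      · exfalso
        have hwbd : ({w,b,d} : Finset V) ∈ H := memp w b d hP (fun t => by clear * -; tauto)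
        have hnvwd : ({v,w,d} : Finset V) ∉ H := hQ
        rcases exactOne H hfree hvb hva hvd hba hbd had
            (memp v b a hvab (fun t => by clear * -; tauto)) hgH' with ⟨hR, hS⟩ | ⟨hR, hS⟩
        · rcases exactOne H hfree hva hvw hvd haw had hwd
              (memp v a w heH' (fun t => by clear * -; tauto)) hR with ⟨hT, _⟩ | ⟨hT, _⟩
          · exact hnvwd hT
          · rcases exactOne H hfree hwd hwa hwb hda hdb hab
                (memp w d a hT (fun t => by clear * -; tauto)) (memp w d b hwbd (fun t => by clear * -; tauto))
              with ⟨hU, _⟩ | ⟨hU, _⟩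
            · exact hwab hU
            · exact hS (memp b a d hU (fun t => by clear * -; tauto))
        · rcases exactOne H hfree hbd hba hbw hda hdw haw
              (memp b d a hR (fun t => by clear * -; tauto)) (memp b d w hwbd (fun t => by clear * -; tauto))
            with ⟨hT, _⟩ | ⟨hT, _⟩
          · exact hwab (memp w a b hT (fun t => by clear * -; tauto))
          · rcases exactOne H hfree hwa hwv hwd hav had hvd
                (memp w a v heH' (fun t => by clear * -; tauto)) (memp w a d hT (fun t => by clear * -; tauto))
              with ⟨hU, _⟩ | ⟨hU, _⟩
            · exact hnvwd (memp v w d hU (fun t => by clear * -; tauto))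
            · exact hS (memp v a d hU (fun t => by clear * -; tauto))
  · -- shared pair {v,w}
    have hvxy : v = x ∨ v = y := by
      rcases hvxyc with h | h | h
      · exact Or.inl h
      · exact Or.inr h
      · exact absurd (h.trans hcv) hvb
    have hwxy : w = x ∨ w = y := by
      rcases hwxyc with h | h | h
      · exact Or.inl h
      · exact Or.inr h
      · exact absurd (h.trans hcv) hwb
    have hg' : g = {v,w,d} := by rw [hg_eq]; exact pair_match hvw hvxy hwxy
    have hgH' : ({v,w,d} : Finset V) ∈ H := hg' ▸ hgH
    by_cases hda : d = a
    · rw [hda] at hg'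
      exact ⟨w, b, a, hvw, hvb, hva, hwb, hwa, hba, hf_eq, hg', hfH, hgH,
        memp v b a hvab (fun t => by clear * -; tauto), notmemp w b a hwab (fun t => by clear * -; tauto)⟩
    · have had := Ne.symm hda
      rcases exactOne H hfree hvw hvb hvd hwb hwd hbd hfH' hgH' with ⟨hP, hQ⟩ | ⟨hP, hQ⟩
      · exact ⟨w, b, d, hvw, hvb, hvd, hwb, hwd, hbd, hf_eq, hg', hfH, hgH, hP, hQ⟩
      · exfalso
        rcases exactOne H hfree hvw hva hvd hwa hwd had heH' hgH' with ⟨hR, hS⟩ | ⟨hR, hS⟩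
        · rcases exactOne H hfree hva hvb hvd hab had hbd hvab hR with ⟨hT, _⟩ | ⟨hT, _⟩
          · exact hQ hT
          · rcases exactOne H hfree hbd hba hbw hda hdw haw
                (memp b d a hT (fun t => by clear * -; tauto)) (memp b d w hP (fun t => by clear * -; tauto))
              with ⟨hU, _⟩ | ⟨hU, _⟩
            · exact hwab (memp w a b hU (fun t => by clear * -; tauto))
            · exact hS (memp w a d hU (fun t => by clear * -; tauto))
        · rcases exactOne H hfree hwd hwa hwb hda hdb hab
              (memp w d a hR (fun t => by clear * -; tauto)) (memp w d b hP (fun t => by clear * -; tauto))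
            with ⟨hT, _⟩ | ⟨hT, _⟩
          · exact hwab hT
          · rcases exactOne H hfree hab hav had hbv hbd hvd
                (memp a b v hvab (fun t => by clear * -; tauto)) (memp a b d hT (fun t => by clear * -; tauto))
              with ⟨hU, _⟩ | ⟨hU, _⟩
            · exact hS (memp v a d hU (fun t => by clear * -; tauto))
            · exact hQ (memp v b d hU (fun t => by clear * -; tauto))

lemma conn_symm (H : Finset (Finset V)) {a b : Finset V}
    (h : Relation.ReflTransGen (tightStep H) a b) :
    Relation.ReflTransGen (tightStep H) b a := by
  induction h with
  | refl => exact Relation.ReflTransGen.refl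
  | tail _ h2 ih =>
      exact Relation.ReflTransGen.trans
        (Relation.ReflTransGen.single ⟨h2.2.1, h2.1, by rw [inter_comm]; exact h2.2.2⟩) ih

lemma apex_chain (H : Finset (Finset V))
    (hfree : ∀ X : Finset V, X.card = 4 → spanCount H X ≠ 2 ∧ spanCount H X ≠ 4)
    (h3 : ∀ e ∈ H, e.card = 3) {v : V} {e f : Finset V} (hv : IsApex H v e f) :
    ∀ g, Relation.ReflTransGen (tightStep H) f g → g = f ∨ ∃ p, IsApex H v p g := by
  intro g hconn
  induction hconn with
  | refl => exact Or.inl rfl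
  | tail _ h2 ih =>
      rcases ih with rfl | ⟨p, hp⟩
      · exact Or.inr ⟨_, apex_step H hfree h3 hv h2⟩
      · exact Or.inr ⟨_, apex_step H hfree h3 hp h2⟩

theorem main_thm {V : Type*} [DecidableEq V] (H : Finset (Finset V))
    (h3 : ∀ e ∈ H, e.card = 3) :
    (∀ X : Finset V, X.card = 4 → spanCount H X ≠ 2 ∧ spanCount H X ≠ 4) ↔
      (∀ C : Finset (Finset V), IsTightComponent H C → IsStarEdgeSet C) := by
  classical
  constructor
  · -- forward direction
    intro hfree C hC
    obtain ⟨hne, hsub, hclosed, hconn⟩ := hC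
    by_cases hsing : ∀ e ∈ C, ∀ f ∈ C, e = f
    · obtain ⟨e, he⟩ := hne
      have he3 := h3 e (hsub he)
      obtain ⟨a, b, c, hab, hac, hbc, he_eq⟩ := Finset.card_eq_three.mp he3
      refine ⟨a, {b, c}, by simp [hab, hac], fun t => ⟨fun ht => ?_, ?_⟩⟩
      · have hte : t = e := hsing t ht e he
        exact ⟨b, by simp, c, by simp, hbc, by rw [hte, he_eq]⟩
      · rintro ⟨x, hx, y, hy, hxy, rfl⟩
        simp only [mem_insert, mem_singleton] at hx hy
        have : ({a, x, y} : Finset V) = e := by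
          rcases hx with rfl | rfl <;> rcases hy with rfl | rfl
          · exact absurd rfl hxy
          · rw [he_eq]
          · rw [he_eq]; exact trip_perm (fun t => by clear * -; tauto)
          · exact absurd rfl hxy
        exact this ▸ he
    · push_neg at hsing
      obtain ⟨e0, he0C, f0', hf0C, hne0⟩ := hsing
      have hc00 : Relation.ReflTransGen (tightStep H) e0 f0' := hconn e0 he0C f0' hf0C
      rcases Relation.ReflTransGen.cases_head hc00 with heq | ⟨f1, hstep, _⟩
      · exact absurd heq hne0
      have hf1H : f1 ∈ H := hstep.2.1
      have hf1C : f1 ∈ C := hclosed e0 he0C f1 hf1H (Relation.ReflTransGen.single hstep)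
      obtain ⟨v, hv⟩ := apex_exists H hfree h3 hstep
      have hvC : ∀ g ∈ C, v ∈ g := by
        intro g hg
        have hcg : Relation.ReflTransGen (tightStep H) f1 g := hconn f1 hf1C g hg
        rcases apex_chain H hfree h3 hv g hcg with rfl | ⟨p, hp⟩
        · exact hv.mem_snd
        · exact hp.mem_snd
      have hC3 : ∀ t ∈ C, t.card = 3 := fun t ht => h3 t (hsub ht)
      have edge_shape : ∀ t ∈ C, ∃ x y : V, x ≠ y ∧ v ≠ x ∧ v ≠ y ∧ t = {v, x, y} := by
        intro t ht
        have hvt := hvC t ht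
        have h2 : (t.erase v).card = 2 := by rw [card_erase_of_mem hvt, hC3 t ht]
        obtain ⟨x, y, hxy, hpair⟩ := card_eq_two.mp h2
        have hx : x ∈ t.erase v := by rw [hpair]; simp
        have hy : y ∈ t.erase v := by rw [hpair]; simp
        refine ⟨x, y, hxy, Ne.symm (mem_erase.mp hx).1, Ne.symm (mem_erase.mp hy).1, ?_⟩
        rw [← insert_erase hvt, hpair]
      have mem_step' : ∀ t ∈ C, ∀ u ∈ H, (t ∩ u).card = 2 → u ∈ C := fun t ht u hu hcard =>
        hclosed t ht u hu (Relation.ReflTransGen.single ⟨hsub ht, hu, hcard⟩)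
      have link_tri : ∀ x y z : V, x ≠ y → y ≠ z → x ≠ z →
          ({v, x, y} : Finset V) ∈ C → ({v, y, z} : Finset V) ∈ C →
          ({v, x, z} : Finset V) ∈ C := by
        intro x y z hxy hyz hxz hp hq
        have hpH := hsub hp
        have hqH := hsub hq
        obtain ⟨hvx, hvy, _⟩ := distinct_of_triple_card (h3 _ hpH)
        obtain ⟨_, hvz, _⟩ := distinct_of_triple_card (h3 _ hqH)
        rcases exactOne H hfree hvy hvx hvz (Ne.symm hxy) hyz hxz
            (memp v y x hpH (fun t => by clear * -; tauto)) hqH with ⟨h1, _⟩ | ⟨h1, _⟩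
        · refine mem_step' _ hp _ h1 ?_
          exact inter2 (h3 _ hpH) (h3 _ h1) (show v ∈ ({v,x,y} : Finset V) by simp)
            (show v ∈ ({v,x,z} : Finset V) by simp) (by simp) (by simp) hvx
            (ne_fin (show y ∈ ({v,x,y} : Finset V) by simp)
              (notMem_triple (Ne.symm hvy) hxy.symm hyz))
        · exfalso
          have huC : ({y, x, z} : Finset V) ∈ C := by
            refine mem_step' _ hq _ h1 ?_
            exact inter2 (h3 _ hqH) (h3 _ h1) (show y ∈ ({v,y,z} : Finset V) by simp)
              (show y ∈ ({y,x,z} : Finset V) by simp) (show z ∈ ({v,y,z} : Finset V) by simp)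
              (show z ∈ ({y,x,z} : Finset V) by simp) hyz
              (ne_fin (show v ∈ ({v,y,z} : Finset V) by simp)
                (notMem_triple hvy hvx hvz))
          have := hvC _ huC
          simp only [mem_insert, mem_singleton] at this
          tauto
      have link_conn : ∀ g₁ ∈ C, ∀ x ∈ g₁.erase v, ∀ g₂,
          Relation.ReflTransGen (tightStep H) g₁ g₂ →
          g₂ ∈ C ∧ ∀ y ∈ g₂.erase v, x = y ∨ ({v, x, y} : Finset V) ∈ C := by
        intro g₁ hg₁ x hx g₂ hconn2
        induction hconn2 with
        | refl =>
            refine ⟨hg₁, fun y hy => ?_⟩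
            by_cases hxy : x = y
            · exact Or.inl hxy
            · right
              obtain ⟨hxv, hxg⟩ := mem_erase.mp hx
              obtain ⟨hyv, hyg⟩ := mem_erase.mp hy
              have h1 : g₁ = {v, x, y} :=
                eq_triple (hC3 g₁ hg₁) (hvC g₁ hg₁) hxg hyg (Ne.symm hxv) (Ne.symm hyv) hxy
              exact h1 ▸ hg₁
        | @tail b' c' h1 h2 ih =>
            obtain ⟨hb'C, hprev⟩ := ih
            have hcC : c' ∈ C := mem_step' _ hb'C _ h2.2.1 h2.2.2
            refine ⟨hcC, fun y hy => ?_⟩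
            have hvb' : v ∈ b' := hvC _ hb'C
            have hvc : v ∈ c' := hvC _ hcC
            obtain ⟨z1, z2, hz12, hzpair⟩ := card_eq_two.mp h2.2.2
            have hvin : v ∈ b' ∩ c' := mem_inter.2 ⟨hvb', hvc⟩
            have hzex : ∃ z, z ∈ b' ∩ c' ∧ z ≠ v := by
              rw [hzpair] at hvin
              simp only [mem_insert, mem_singleton] at hvin
              rcases hvin with rfl | rfl
              · exact ⟨z2, by rw [hzpair]; simp, Ne.symm hz12⟩
              · exact ⟨z1, by rw [hzpair]; simp, hz12⟩
            obtain ⟨z, hzin, hzv⟩ := hzex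
            have hzb' : z ∈ b'.erase v := mem_erase.2 ⟨hzv, (mem_inter.mp hzin).1⟩
            have hzc : z ∈ c'.erase v := mem_erase.2 ⟨hzv, (mem_inter.mp hzin).2⟩
            have hxz := hprev z hzb'
            by_cases hxy : x = y
            · exact Or.inl hxy
            right
            by_cases hyz : y = z
            · rcases hxz with h | h
              · exact absurd (h.trans hyz.symm) hxy
              · rw [hyz]; exact h
            · obtain ⟨hyv', hyc'⟩ := mem_erase.mp hy
              obtain ⟨hzv', hzc'⟩ := mem_erase.mp hzc
              have hceq : c' = {v, z, y} :=
                eq_triple (hC3 c' hcC) hvc hzc' hyc' (Ne.symm hzv') (Ne.symm hyv')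
                  (fun h => hyz h.symm)
              have hzyC : ({v, z, y} : Finset V) ∈ C := hceq ▸ hcC
              by_cases hxz2 : x = z
              · rw [hxz2]; exact hzyC
              · rcases hxz with h | h
                · exact absurd h hxz2
                · exact link_tri x z y hxz2 (fun h' => hyz h'.symm) hxy h hzyC
      refine ⟨v, C.biUnion (fun t => t.erase v), ?_, fun t => ⟨fun ht => ?_, ?_⟩⟩
      · intro hvmem
        obtain ⟨t, ht, hvt⟩ := mem_biUnion.mp hvmem
        exact (mem_erase.mp hvt).1 rfl
      · obtain ⟨x, y, hxy, hvx, hvy, hteq⟩ := edge_shape t ht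
        refine ⟨x, ?_, y, ?_, hxy, hteq⟩
        · exact mem_biUnion.2 ⟨t, ht, mem_erase.2 ⟨Ne.symm hvx, by rw [hteq]; simp⟩⟩
        · exact mem_biUnion.2 ⟨t, ht, mem_erase.2 ⟨Ne.symm hvy, by rw [hteq]; simp⟩⟩
      · rintro ⟨x, hxS, y, hyS, hxy, rfl⟩
        obtain ⟨g₁, hg₁, hx⟩ := mem_biUnion.mp hxS
        obtain ⟨g₂, hg₂, hy⟩ := mem_biUnion.mp hyS
        have hres := (link_conn g₁ hg₁ x hx g₂ (hconn g₁ hg₁ g₂ hg₂)).2 y hy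
        rcases hres with h | h
        · exact absurd h hxy
        · exact h
  · -- backward direction
    intro hstar X hX4
    have comp : ∀ e ∈ H, IsTightComponent H (H.filter (fun u => tightConn H e u)) := by
      intro e heH
      refine ⟨⟨e, mem_filter.2 ⟨heH, Relation.ReflTransGen.refl⟩⟩, filter_subset _ _, ?_, ?_⟩
      · intro e' he' f' hf' hconn'
        exact mem_filter.2 ⟨hf', Relation.ReflTransGen.trans (mem_filter.mp he').2 hconn'⟩
      · intro e' he' f' hf'
        exact Relation.ReflTransGen.trans (conn_symm H (mem_filter.mp he').2)
          (mem_filter.mp hf').2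
    constructor
    · -- spanCount ≠ 2
      intro h2span
      obtain ⟨e, f, hef, hFpair⟩ := card_eq_two.mp h2span
      have heF : e ∈ (X.powersetCard 3).filter (· ∈ H) := by rw [hFpair]; simp
      have hfF : f ∈ (X.powersetCard 3).filter (· ∈ H) := by rw [hFpair]; simp
      obtain ⟨hepc, heH⟩ := mem_filter.mp heF
      obtain ⟨hfpc, hfH⟩ := mem_filter.mp hfF
      obtain ⟨heX, he3⟩ := mem_powersetCard.mp hepc
      obtain ⟨hfX, hf3⟩ := mem_powersetCard.mp hfpc
      have hunion : (e ∪ f).card ≤ 4 := by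
        have := card_le_card (union_subset heX hfX)
        omega
      have hint : (e ∩ f).card = 2 := by
        have hiu := card_union_add_card_inter e f
        have hle3 : (e ∩ f).card ≤ 3 := le_trans (card_le_card inter_subset_left) (le_of_eq he3)
        have hne3 : (e ∩ f).card ≠ 3 := by
          intro h3eq
          have heq : e ∩ f = e := eq_of_subset_of_card_le inter_subset_left (by omega)
          have hsub2 : e ⊆ f := by rw [← heq]; exact inter_subset_right
          exact hef (eq_of_subset_of_card_le hsub2 (by omega))
        omega
      obtain ⟨v, S, hvS, hstar'⟩ := hstar _ (comp e heH)
      have heC : e ∈ H.filter (fun u => tightConn H e u) :=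
        mem_filter.2 ⟨heH, Relation.ReflTransGen.refl⟩
      have hfC : f ∈ H.filter (fun u => tightConn H e u) :=
        mem_filter.2 ⟨hfH, Relation.ReflTransGen.single ⟨heH, hfH, hint⟩⟩
      obtain ⟨x1, hx1, y1, hy1, hxy1, he_eq⟩ := (hstar' e).mp heC
      obtain ⟨x2, hx2, y2, hy2, hxy2, hf_eq⟩ := (hstar' f).mp hfC
      obtain ⟨hvx1, hvy1, _⟩ := distinct_of_triple_card (he_eq ▸ he3)
      obtain ⟨hvx2, hvy2, _⟩ := distinct_of_triple_card (hf_eq ▸ hf3)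
      have hve : v ∈ e := by rw [he_eq]; simp
      have hvf : v ∈ f := by rw [hf_eq]; simp
      obtain ⟨z1, z2, hz12, hzpair⟩ := card_eq_two.mp hint
      have hvin : v ∈ e ∩ f := mem_inter.2 ⟨hve, hvf⟩
      have huex : ∃ u, u ∈ e ∩ f ∧ u ≠ v := by
        rw [hzpair] at hvin
        simp only [mem_insert, mem_singleton] at hvin
        rcases hvin with rfl | rfl
        · exact ⟨z2, by rw [hzpair]; simp, Ne.symm hz12⟩
        · exact ⟨z1, by rw [hzpair]; simp, hz12⟩
      obtain ⟨u, huin, huv⟩ := huex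
      have hue : u ∈ e := (mem_inter.mp huin).1
      have huf : u ∈ f := (mem_inter.mp huin).2
      have hu1 : u = x1 ∨ u = y1 := by
        rw [he_eq] at hue
        simp only [mem_insert, mem_singleton] at hue
        rcases hue with h | h | h
        · exact absurd h huv
        · exact Or.inl h
        · exact Or.inr h
      have hu2 : u = x2 ∨ u = y2 := by
        rw [hf_eq] at huf
        simp only [mem_insert, mem_singleton] at huf
        rcases huf with h | h | h
        · exact absurd h huv
        · exact Or.inl h
        · exact Or.inr h
      have hmex : ∃ m, m ∈ S ∧ m ≠ u ∧ m ≠ v ∧ e = {v, u, m} := by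
        rcases hu1 with h | h
        · exact ⟨y1, hy1, by rw [h]; exact Ne.symm hxy1, Ne.symm hvy1, by rw [he_eq, h]⟩
        · exact ⟨x1, hx1, by rw [h]; exact hxy1, Ne.symm hvx1,
            by rw [he_eq, h]; exact trip_perm (fun t => by clear * -; tauto)⟩
      have hnex : ∃ n, n ∈ S ∧ n ≠ u ∧ n ≠ v ∧ f = {v, u, n} := by
        rcases hu2 with h | h
        · exact ⟨y2, hy2, by rw [h]; exact Ne.symm hxy2, Ne.symm hvy2, by rw [hf_eq, h]⟩
        · exact ⟨x2, hx2, by rw [h]; exact hxy2, Ne.symm hvx2,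
            by rw [hf_eq, h]; exact trip_perm (fun t => by clear * -; tauto)⟩
      obtain ⟨m, hmS, hmu, hmv, he_eq'⟩ := hmex
      obtain ⟨n, hnS, hnu, hnv, hf_eq'⟩ := hnex
      have hmn : m ≠ n := by
        intro h
        apply hef
        rw [he_eq', hf_eq', h]
      have htC : ({v, m, n} : Finset V) ∈ H.filter (fun u => tightConn H e u) :=
        (hstar' _).mpr ⟨m, hmS, n, hnS, hmn, rfl⟩
      have htH : ({v, m, n} : Finset V) ∈ H := (mem_filter.mp htC).1
      have htX : ({v, m, n} : Finset V) ⊆ X := by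
        intro z hz
        simp only [mem_insert, mem_singleton] at hz
        rcases hz with rfl | rfl | rfl
        · exact heX hve
        · exact heX (by rw [he_eq']; simp)
        · exact hfX (by rw [hf_eq']; simp)
      have htF : ({v, m, n} : Finset V) ∈ (X.powersetCard 3).filter (· ∈ H) :=
        mem_filter.2 ⟨mem_powersetCard.2 ⟨htX, h3 _ htH⟩, htH⟩
      rw [hFpair] at htF
      simp only [mem_insert, mem_singleton] at htF
      rcases htF with h | h
      · have hhn : n ∈ e := by rw [← h]; simp
        rw [he_eq'] at hhn
        simp only [mem_insert, mem_singleton] at hhn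
        rcases hhn with h' | h' | h'
        · exact hnv h'
        · exact hnu h'
        · exact hmn h'.symm
      · have hhm : m ∈ f := by rw [← h]; simp
        rw [hf_eq'] at hhm
        simp only [mem_insert, mem_singleton] at hhm
        rcases hhm with h' | h' | h'
        · exact hmv h'
        · exact hmu h'
        · exact hmn h'
    · -- spanCount ≠ 4
      intro h4span
      have hpc4 : (X.powersetCard 3).card = 4 := by
        rw [card_powersetCard, hX4]
        rfl
      have hFeq : (X.powersetCard 3).filter (· ∈ H) = X.powersetCard 3 :=
        eq_of_subset_of_card_le (filter_subset _ _)
          (by rw [hpc4]; exact le_of_eq h4span.symm)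
      have hallH : ∀ t : Finset V, t ⊆ X → t.card = 3 → t ∈ H := by
        intro t hts htc
        have ht : t ∈ (X.powersetCard 3).filter (· ∈ H) := by
          rw [hFeq]; exact mem_powersetCard.2 ⟨hts, htc⟩
        exact (mem_filter.mp ht).2
      have hXne : X.Nonempty := by rw [← card_pos, hX4]; norm_num
      obtain ⟨p, hp⟩ := hXne
      have h3' : (X.erase p).card = 3 := by rw [card_erase_of_mem hp, hX4]
      obtain ⟨q, r, s, hqr, hqs, hrs, herase⟩ := card_eq_three.mp h3'
      have hqE : q ∈ X.erase p := by rw [herase]; simp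
      have hrE : r ∈ X.erase p := by rw [herase]; simp
      have hsE : s ∈ X.erase p := by rw [herase]; simp
      have hpq : p ≠ q := Ne.symm (mem_erase.mp hqE).1
      have hpr : p ≠ r := Ne.symm (mem_erase.mp hrE).1
      have hps : p ≠ s := Ne.symm (mem_erase.mp hsE).1
      have hXeq : X = {p, q, r, s} := by rw [← insert_erase hp, herase]
      have hsub1 : ({p,q,r} : Finset V) ⊆ X := by
        rw [hXeq]; intro z hz
        simp only [mem_insert, mem_singleton] at hz ⊢; tauto
      have hsub2 : ({p,q,s} : Finset V) ⊆ X := by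
        rw [hXeq]; intro z hz
        simp only [mem_insert, mem_singleton] at hz ⊢; tauto
      have hsub3 : ({p,r,s} : Finset V) ⊆ X := by
        rw [hXeq]; intro z hz
        simp only [mem_insert, mem_singleton] at hz ⊢; tauto
      have hsub4 : ({q,r,s} : Finset V) ⊆ X := by
        rw [hXeq]; intro z hz
        simp only [mem_insert, mem_singleton] at hz ⊢; tauto
      have hE1 : ({p,q,r} : Finset V) ∈ H := hallH _ hsub1 (triple_card hpq hpr hqr)
      have hE2 : ({p,q,s} : Finset V) ∈ H := hallH _ hsub2 (triple_card hpq hps hqs)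
      have hE3 : ({p,r,s} : Finset V) ∈ H := hallH _ hsub3 (triple_card hpr hps hrs)
      have hE4 : ({q,r,s} : Finset V) ∈ H := hallH _ hsub4 (triple_card hqr hqs hrs)
      have hc1 : ({p,q,r} : Finset V).card = 3 := triple_card hpq hpr hqr
      have hstep2 : tightStep H {p,q,r} {p,q,s} :=
        ⟨hE1, hE2, inter2 hc1 (triple_card hpq hps hqs) (by simp) (by simp)
          (show q ∈ ({p,q,r} : Finset V) by simp) (show q ∈ ({p,q,s} : Finset V) by simp) hpq
          (ne_fin (show r ∈ ({p,q,r} : Finset V) by simp)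
            (notMem_triple (Ne.symm hpr) (Ne.symm hqr) hrs))⟩
      have hstep3 : tightStep H {p,q,r} {p,r,s} :=
        ⟨hE1, hE3, inter2 hc1 (triple_card hpr hps hrs) (by simp) (by simp)
          (show r ∈ ({p,q,r} : Finset V) by simp) (show r ∈ ({p,r,s} : Finset V) by simp) hpr
          (ne_fin (show q ∈ ({p,q,r} : Finset V) by simp)
            (notMem_triple (Ne.symm hpq) hqr hqs))⟩
      have hstep4 : tightStep H {p,q,r} {q,r,s} :=
        ⟨hE1, hE4, inter2 hc1 (triple_card hqr hqs hrs)
          (show q ∈ ({p,q,r} : Finset V) by simp) (show q ∈ ({q,r,s} : Finset V) by simp)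
          (show r ∈ ({p,q,r} : Finset V) by simp) (show r ∈ ({q,r,s} : Finset V) by simp) hqr
          (ne_fin (show p ∈ ({p,q,r} : Finset V) by simp)
            (notMem_triple hpq hpr hps))⟩
      obtain ⟨v, S, hvS, hstar'⟩ := hstar _ (comp _ hE1)
      have hC1 : ({p,q,r} : Finset V) ∈ H.filter (fun u => tightConn H {p,q,r} u) :=
        mem_filter.2 ⟨hE1, Relation.ReflTransGen.refl⟩
      have hC2 : ({p,q,s} : Finset V) ∈ H.filter (fun u => tightConn H {p,q,r} u) :=
        mem_filter.2 ⟨hE2, Relation.ReflTransGen.single hstep2⟩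
      have hC3' : ({p,r,s} : Finset V) ∈ H.filter (fun u => tightConn H {p,q,r} u) :=
        mem_filter.2 ⟨hE3, Relation.ReflTransGen.single hstep3⟩
      have hC4 : ({q,r,s} : Finset V) ∈ H.filter (fun u => tightConn H {p,q,r} u) :=
        mem_filter.2 ⟨hE4, Relation.ReflTransGen.single hstep4⟩
      have hv1 : v ∈ ({p,q,r} : Finset V) := by
        obtain ⟨x, _, y, _, _, ht⟩ := (hstar' _).mp hC1
        rw [ht]; simp
      have hv2 : v ∈ ({p,q,s} : Finset V) := by
        obtain ⟨x, _, y, _, _, ht⟩ := (hstar' _).mp hC2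
        rw [ht]; simp
      have hv3 : v ∈ ({p,r,s} : Finset V) := by
        obtain ⟨x, _, y, _, _, ht⟩ := (hstar' _).mp hC3'
        rw [ht]; simp
      have hv4 : v ∈ ({q,r,s} : Finset V) := by
        obtain ⟨x, _, y, _, _, ht⟩ := (hstar' _).mp hC4
        rw [ht]; simp
      simp only [mem_insert, mem_singleton] at hv1 hv2 hv3 hv4
      rcases hv1 with rfl | rfl | rfl
      · tauto
      · tauto
      · tauto

end StarProofAux


theorem stmt_2 {V : Type*} [DecidableEq V] (H : Finset (Finset V))
    (h3 : ∀ e ∈ H, e.card = 3) :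
    (∀ X : Finset V, X.card = 4 → spanCount H X ≠ 2 ∧ spanCount H X ≠ 4) ↔
      (∀ C : Finset (Finset V), IsTightComponent H C → IsStarEdgeSet C) := by
  exact StarProofAux.main_thm H h3
end

section
/- Let H be a 3-uniform hypergraph in which no 4 vertices span exactly 2 edges and no 4 vertices span exactly 4 edges. Let (v,S) be a star contained in H with |S| ≥ 3. Then there is no edge of H of the form {u,x,y} with u ∉ {v} ∪ S and x, y ∈ S. -/
open Finset

lemma pow3_four {V : Type*} [DecidableEq V] (a b c d : V)
    (hab : a ≠ b) (hac : a ≠ c) (had : a ≠ d) (hbc : b ≠ c) (hbd : b ≠ d) (hcd : c ≠ d) :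
    ({a,b,c,d} : Finset V).powersetCard 3 = {{b,c,d},{a,c,d},{a,b,d},{a,b,c}} := by
  have h1 : a ∉ ({b,c,d} : Finset V) := by simp [hab, hac, had]
  have h2 : b ∉ ({c,d} : Finset V) := by simp [hbc, hbd]
  have h3 : c ∉ ({d} : Finset V) := by simp [hcd]
  have p0 : ({d} : Finset V).powersetCard 0 = {∅} := by simp
  have p1 : ({d} : Finset V).powersetCard 1 = {{d}} := by simp [Finset.powersetCard_one]
  have p2 : ({d} : Finset V).powersetCard 2 = ∅ := by
    apply Finset.powersetCard_eq_empty.mpr; simp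
  have p3 : ({d} : Finset V).powersetCard 3 = ∅ := by
    apply Finset.powersetCard_eq_empty.mpr; simp
  have q1 : ({c,d} : Finset V).powersetCard 1 = {{d},{c}} := by
    rw [show ({c,d} : Finset V) = insert c {d} from rfl,
      Finset.powersetCard_succ_insert h3, p0, p1]
    ext e; simp
  have q2 : ({c,d} : Finset V).powersetCard 2 = {{c,d}} := by
    rw [show ({c,d} : Finset V) = insert c {d} from rfl,
      Finset.powersetCard_succ_insert h3, p1, p2]
    simp
  have q3 : ({c,d} : Finset V).powersetCard 3 = ∅ := by
    rw [show ({c,d} : Finset V) = insert c {d} from rfl,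
      Finset.powersetCard_succ_insert h3, p2, p3]
    simp
  have r2 : ({b,c,d} : Finset V).powersetCard 2 = {{c,d},{b,d},{b,c}} := by
    rw [show ({b,c,d} : Finset V) = insert b {c,d} from rfl,
      Finset.powersetCard_succ_insert h2, q1, q2]
    ext e; simp; tauto
  have r3 : ({b,c,d} : Finset V).powersetCard 3 = {{b,c,d}} := by
    rw [show ({b,c,d} : Finset V) = insert b {c,d} from rfl,
      Finset.powersetCard_succ_insert h2, q2, q3]
    simp
  rw [show ({a,b,c,d} : Finset V) = insert a {b,c,d} from rfl,
    Finset.powersetCard_succ_insert h1, r2, r3]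
  ext e; simp; tauto

lemma spanCount_four {V : Type*} [DecidableEq V] (H : Finset (Finset V)) (a b c d : V)
    (hab : a ≠ b) (hac : a ≠ c) (had : a ≠ d) (hbc : b ≠ c) (hbd : b ≠ d) (hcd : c ≠ d) :
    spanCount H {a,b,c,d} =
      (if ({b,c,d} : Finset V) ∈ H then 1 else 0) +
      ((if ({a,c,d} : Finset V) ∈ H then 1 else 0) +
      ((if ({a,b,d} : Finset V) ∈ H then 1 else 0) +
      (if ({a,b,c} : Finset V) ∈ H then 1 else 0))) := by
  rw [spanCount, pow3_four a b c d hab hac had hbc hbd hcd, Finset.card_filter]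
  have n1 : ({b,c,d} : Finset V) ∉ ({{a,c,d},{a,b,d},{a,b,c}} : Finset (Finset V)) := by
    simp only [Finset.mem_insert, Finset.mem_singleton]
    push_neg
    refine ⟨?_, ?_, ?_⟩ <;>
    · intro h
      have : a ∈ ({b,c,d} : Finset V) := by rw [h]; simp
      simp only [Finset.mem_insert, Finset.mem_singleton] at this
      rcases this with h'|h'|h' <;> simp_all
  have n2 : ({a,c,d} : Finset V) ∉ ({{a,b,d},{a,b,c}} : Finset (Finset V)) := by
    simp only [Finset.mem_insert, Finset.mem_singleton]
    push_neg
    constructor <;>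
    · intro h
      have : b ∈ ({a,c,d} : Finset V) := by rw [h]; simp
      simp only [Finset.mem_insert, Finset.mem_singleton] at this
      rcases this with h'|h'|h' <;> simp_all
  have n3 : ({a,b,d} : Finset V) ∉ ({{a,b,c}} : Finset (Finset V)) := by
    simp only [Finset.mem_singleton]
    intro h
    have : c ∈ ({a,b,d} : Finset V) := by rw [h]; simp
    simp only [Finset.mem_insert, Finset.mem_singleton] at this
    rcases this with h'|h'|h' <;> simp_all
  rw [Finset.sum_insert n1, Finset.sum_insert n2, Finset.sum_insert n3, Finset.sum_singleton]

lemma card_four {V : Type*} [DecidableEq V] (a b c d : V)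
    (hab : a ≠ b) (hac : a ≠ c) (had : a ≠ d) (hbc : b ≠ c) (hbd : b ≠ d) (hcd : c ≠ d) :
    ({a,b,c,d} : Finset V).card = 4 := by
  rw [Finset.card_insert_of_notMem (by simp [hab, hac, had]),
    Finset.card_insert_of_notMem (by simp [hbc, hbd]),
    Finset.card_insert_of_notMem (by simp [hcd]), Finset.card_singleton]

theorem stmt_4 {V : Type*} [DecidableEq V] (H : Finset (Finset V))
    (h3 : ∀ e ∈ H, e.card = 3)
    (hfree : ∀ X : Finset V, X.card = 4 → spanCount H X ≠ 2 ∧ spanCount H X ≠ 4)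
    (v : V) (S : Finset V) (hvS : v ∉ S) (hS : 3 ≤ S.card)
    (hstar : ∀ x ∈ S, ∀ y ∈ S, x ≠ y → ({v, x, y} : Finset V) ∈ H) :
    ∀ u : V, u ≠ v → u ∉ S → ∀ x ∈ S, ∀ y ∈ S, x ≠ y →
      ({u, x, y} : Finset V) ∉ H := by
  intro u huv huS x hx y hy hxy hp
  -- find z ∈ S distinct from x and y
  have hyex : y ∈ S.erase x := Finset.mem_erase.mpr ⟨hxy.symm, hy⟩
  have hcard : 1 ≤ ((S.erase x).erase y).card := by
    rw [Finset.card_erase_of_mem hyex, Finset.card_erase_of_mem hx]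
    omega
  obtain ⟨z, hz⟩ := Finset.card_pos.mp hcard
  rw [Finset.mem_erase, Finset.mem_erase] at hz
  obtain ⟨hzy, hzx, hzS⟩ := hz
  -- distinctness
  have hvx : v ≠ x := fun h => hvS (h ▸ hx)
  have hvy : v ≠ y := fun h => hvS (h ▸ hy)
  have hvz : v ≠ z := fun h => hvS (h ▸ hzS)
  have hux : u ≠ x := fun h => huS (h ▸ hx)
  have huy : u ≠ y := fun h => huS (h ▸ hy)
  have huz : u ≠ z := fun h => huS (h ▸ hzS)
  have hvu : v ≠ u := huv.symm
  have hxz : x ≠ z := hzx.symm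
  have hyz : y ≠ z := hzy.symm
  -- star edges
  have sxy := hstar x hx y hy hxy
  have sxz := hstar x hx z hzS hxz
  have syz := hstar y hy z hzS hyz
  -- constraints from the five 4-sets
  have c1 := hfree {v,u,x,y} (card_four v u x y hvu hvx hvy hux huy hxy)
  rw [spanCount_four H v u x y hvu hvx hvy hux huy hxy] at c1
  have c2 := hfree {v,u,x,z} (card_four v u x z hvu hvx hvz hux huz hxz)
  rw [spanCount_four H v u x z hvu hvx hvz hux huz hxz] at c2
  have c3 := hfree {v,u,y,z} (card_four v u y z hvu hvy hvz huy huz hyz)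
  rw [spanCount_four H v u y z hvu hvy hvz huy huz hyz] at c3
  have c4 := hfree {u,x,y,z} (card_four u x y z hux huy huz hxy hxz hyz)
  rw [spanCount_four H u x y z hux huy huz hxy hxz hyz] at c4
  have c5 := hfree {v,x,y,z} (card_four v x y z hvx hvy hvz hxy hxz hyz)
  rw [spanCount_four H v x y z hvx hvy hvz hxy hxz hyz] at c5
  -- {x,y,z} ∉ H from c5
  have hs : ({x,y,z} : Finset V) ∉ H := by
    intro h
    simp [h, sxy, sxz, syz] at c5
  by_cases hA : ({v,u,x} : Finset V) ∈ H <;>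
  by_cases hB : ({v,u,y} : Finset V) ∈ H <;>
  by_cases hC : ({v,u,z} : Finset V) ∈ H <;>
  by_cases hQ : ({u,x,z} : Finset V) ∈ H <;>
  by_cases hR : ({u,y,z} : Finset V) ∈ H <;>
  simp [hp, hs, hA, hB, hC, hQ, hR, sxy, sxz, syz] at c1 c2 c3 c4
end

section
/- Let H be a 3-uniform hypergraph in which no 4 vertices span exactly 2 edges and no 4 vertices span exactly 4 edges, and let C₁ and C₂ be distinct tight components of H. Then the vertex sets of C₁ and C₂ intersect in at most one vertex. -/
/-!
In such a 3-graph every 4-set spans 0, 1 or 3 edges. Hence two edges `{p, q, r}`, `{p, q, s}`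
force exactly one of `{p, r, s}`, `{q, r, s}`, so a tight component with two edges contains a
complete star: all triples `{v, a, b}` with `a ≠ b` in a set `S` of three leaves. Parity counts on
4-sets show that no edge meets `S` in two vertices while avoiding `v`, and that an edge
`{v, s, w}` lets the star grow by the leaf `w`. A maximal star is therefore closed under tight
steps, i.e. it is the whole component. Any two vertices of a star lie in a common edge, so two
components sharing two vertices `x`, `y` have edges through `{x, y}`; these are equal or tightly
adjacent, and the components coincide.
-/

open Finset

namespace Finset

variable {α : Type*} [DecidableEq α]

theorem powersetCard_eq_image_erase {s : Finset α} {n : ℕ} (hs : #s = n + 1) :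
    s.powersetCard n = s.image s.erase := by
  ext t
  simp only [mem_powersetCard, mem_image]
  constructor
  · rintro ⟨hts, ht⟩
    obtain ⟨x, hx⟩ := card_eq_one.mp (by rw [card_sdiff_of_subset hts]; omega : #(s \ t) = 1)
    obtain ⟨hxs, hxt⟩ := mem_sdiff.mp (hx ▸ mem_singleton_self x)
    refine ⟨x, hxs, (eq_of_subset_of_card_le (fun y hy => ?_) ?_).symm⟩
    · exact mem_erase.mpr ⟨fun hyx => hxt (hyx ▸ hy), hts hy⟩
    · rw [card_erase_of_mem hxs]; omega
  · rintro ⟨x, hx, rfl⟩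
    exact ⟨erase_subset x s, by rw [card_erase_of_mem hx, hs, Nat.add_sub_cancel]⟩

theorem card_filter_powersetCard {s : Finset α} {n : ℕ} (hs : #s = n + 1)
    (p : Finset α → Prop) [DecidablePred p] :
    #((s.powersetCard n).filter p) = #(s.filter fun x => p (s.erase x)) := by
  rw [powersetCard_eq_image_erase hs, filter_image, card_image_of_injOn]
  intro x hx y _ hxy
  by_contra hne
  have : x ∉ s.erase y := by rw [← hxy]; exact notMem_erase x s
  exact this (mem_erase.mpr ⟨hne, (mem_filter.mp hx).1⟩)

theorem ne_of_card_eq_three {a b c : α} (h : #{a, b, c} = 3) : a ≠ b ∧ a ≠ c ∧ b ≠ c := by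
  refine ⟨?_, ?_, ?_⟩ <;> rintro rfl <;>
    simp only [insert_eq_of_mem, mem_insert_self, mem_insert, mem_singleton, or_true] at h <;>
    exact (card_le_two.trans_lt (by norm_num)).ne h

theorem exists_eq_insert_erase_of_card_inter {s t : Finset α} (hst : #s = #t)
    (h : #(s ∩ t) + 1 = #s) : ∃ u ∈ s, ∃ w ∉ s, t = insert w (s.erase u) := by
  obtain ⟨u, hu⟩ :=
    card_eq_one.mp (by have := card_sdiff_add_card_inter s t; omega : #(s \ t) = 1)
  obtain ⟨w, hw⟩ := card_eq_one.mp
    (by have := card_sdiff_add_card_inter t s; rw [inter_comm] at this; omega : #(t \ s) = 1)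
  have hu' := mem_sdiff.mp (hu ▸ mem_singleton_self u)
  have hw' := mem_sdiff.mp (hw ▸ mem_singleton_self w)
  refine ⟨u, hu'.1, w, hw'.2, ?_⟩
  ext x
  simp only [mem_insert, mem_erase]
  constructor
  · intro hx
    by_cases hxs : x ∈ s
    · exact Or.inr ⟨fun h => hu'.2 (h ▸ hx), hxs⟩
    · exact Or.inl (mem_singleton.mp (hw ▸ mem_sdiff.mpr ⟨hx, hxs⟩))
  · rintro (rfl | ⟨hxu, hxs⟩)
    · exact hw'.1
    · by_contra hxt
      exact hxu (mem_singleton.mp (hu ▸ mem_sdiff.mpr ⟨hxs, hxt⟩))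

end Finset

section Hypergraph

variable {V : Type*} [DecidableEq V] {H : Finset (Finset V)}

theorem tightConn_of_two_le_card_inter (h3 : ∀ e ∈ H, #e = 3) {e f : Finset V} (he : e ∈ H)
    (hf : f ∈ H) (hef : 2 ≤ #(e ∩ f)) : tightConn H e f := by
  rcases hef.eq_or_lt with h2 | hlt
  · exact .single ⟨he, hf, h2.symm⟩
  · have hinter : e ∩ f = e := eq_of_subset_of_card_le inter_subset_left (by rw [h3 e he]; omega)
    obtain rfl : e = f :=
      eq_of_subset_of_card_le (inter_eq_left.mp hinter) (by rw [h3 e he, h3 f hf])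
    exact .refl

namespace IsTightComponent

variable {C C' : Finset (Finset V)}

theorem mem_of_tightConn (hC : IsTightComponent H C) {e f : Finset V} (he : e ∈ C) (hf : f ∈ H)
    (hef : tightConn H e f) : f ∈ C :=
  hC.2.2.1 e he f hf hef

theorem eq_of_mem (hC : IsTightComponent H C) (hC' : IsTightComponent H C') {e : Finset V}
    (he : e ∈ C) (he' : e ∈ C') : C = C' := by
  apply Subset.antisymm <;> intro f hf
  · exact hC'.mem_of_tightConn he' (hC.2.1 hf) (hC.2.2.2 e he f hf)
  · exact hC.mem_of_tightConn he (hC'.2.1 hf) (hC'.2.2.2 e he' f hf)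

theorem mem_of_adjacent (h3 : ∀ e ∈ H, #e = 3) (hC : IsTightComponent H C) {a b c d : V}
    (habc : {a, b, c} ∈ C) (habd : {a, b, d} ∈ H) (hcd : c ≠ d) : {a, b, d} ∈ C := by
  have habcH := hC.2.1 habc
  obtain ⟨hab, hac, hbc⟩ := ne_of_card_eq_three (h3 _ habcH)
  obtain ⟨-, had, hbd⟩ := ne_of_card_eq_three (h3 _ habd)
  have hinter : ({a, b, c} ∩ {a, b, d} : Finset V) = {a, b} := by
    ext x; simp only [mem_inter, mem_insert, mem_singleton]; grind
  exact hC.mem_of_tightConn habc habd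
    (tightConn_of_two_le_card_inter h3 habcH habd (by rw [hinter, card_pair hab]))

end IsTightComponent

end Hypergraph

section Parity

variable {V : Type*} [DecidableEq V] {H : Finset (Finset V)}

theorem spanCount_eq_card_filter {X : Finset V} (hX : #X = 4) :
    spanCount H X = #(X.filter fun x => X.erase x ∈ H) :=
  card_filter_powersetCard hX _

theorem spanCount_insert_four {a b c d : V} (hab : a ≠ b) (hac : a ≠ c) (had : a ≠ d)
    (hbc : b ≠ c) (hbd : b ≠ d) (hcd : c ≠ d) :
    spanCount H {a, b, c, d} =
      (if {b, c, d} ∈ H then 1 else 0) + (if {a, c, d} ∈ H then 1 else 0) +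
        (if {a, b, d} ∈ H then 1 else 0) + (if {a, b, c} ∈ H then 1 else 0) := by
  rw [spanCount_eq_card_filter (card_eq_four.mpr ⟨a, b, c, d, hab, hac, had, hbc, hbd, hcd, rfl⟩),
    card_filter, sum_insert (by simp [hab, hac, had]), sum_insert (by simp [hbc, hbd]),
    sum_insert (by simp [hcd]), sum_singleton]
  simp only [erase_insert_eq_erase, erase_insert_of_ne, erase_eq_of_notMem, erase_singleton,
    mem_singleton, hab, hac, had, hbc, hbd, hcd, hab.symm, hac.symm, hbc.symm, ne_eq,
    not_false_eq_true, insert_empty_eq]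
  ring

variable (h3 : ∀ e ∈ H, #e = 3)
  (hfree : ∀ X : Finset V, #X = 4 → spanCount H X ≠ 2 ∧ spanCount H X ≠ 4)
include h3 hfree

/-- Every 4-set spans 0, 1 or 3 edges, so besides an edge `{a, b, c}` it spans an even number
of the other three triples. -/
theorem edge_parity {a b c d : V} (habc : {a, b, c} ∈ H) (hd : d ∉ ({a, b, c} : Finset V)) :
    {a, b, d} ∈ H ↔ ({a, c, d} ∈ H ↔ {b, c, d} ∉ H) := by
  obtain ⟨hab, hac, hbc⟩ := ne_of_card_eq_three (h3 _ habc)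
  simp only [mem_insert, mem_singleton, not_or] at hd
  obtain ⟨had, hbd, hcd⟩ : a ≠ d ∧ b ≠ d ∧ c ≠ d := by grind
  have key := hfree _ (card_eq_four.mpr ⟨a, b, c, d, hab, hac, had, hbc, hbd, hcd, rfl⟩)
  rw [spanCount_insert_four hab hac had hbc hbd hcd, if_pos habc] at key
  by_cases h₁ : {a, b, d} ∈ H <;> by_cases h₂ : {a, c, d} ∈ H <;> by_cases h₃ : {b, c, d} ∈ H <;>
    simp [h₁, h₂, h₃] at key ⊢

end Parity

section Star

variable {V : Type*} [DecidableEq V] {H C : Finset (Finset V)}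

def starEdges (v : V) (S : Finset V) : Finset (Finset V) := (S.powersetCard 2).image (insert v)

theorem mem_starEdges {v : V} {S f : Finset V} :
    f ∈ starEdges v S ↔ ∃ a ∈ S, ∃ b ∈ S, a ≠ b ∧ {v, a, b} = f := by
  simp only [starEdges, mem_image, mem_powersetCard, card_eq_two]
  constructor
  · rintro ⟨_, ⟨hsub, a, b, hab, rfl⟩, rfl⟩
    exact ⟨a, hsub (by simp), b, hsub (by simp), hab, rfl⟩
  · rintro ⟨a, ha, b, hb, hab, rfl⟩
    exact ⟨{a, b}, ⟨by simp [insert_subset_iff, ha, hb], a, b, hab, rfl⟩, rfl⟩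

theorem starEdges_subset_iff {v : V} {S : Finset V} :
    starEdges v S ⊆ C ↔ ∀ a ∈ S, ∀ b ∈ S, a ≠ b → {v, a, b} ∈ C := by
  simp only [subset_iff, mem_starEdges]
  constructor
  · exact fun h a ha b hb hab => h ⟨a, ha, b, hb, hab, rfl⟩
  · rintro h _ ⟨a, ha, b, hb, hab, rfl⟩
    exact h a ha b hb hab

theorem starEdges_three_subset {v a b c : V} (hab : {v, a, b} ∈ C) (hac : {v, a, c} ∈ C)
    (hbc : {v, b, c} ∈ C) : starEdges v {a, b, c} ⊆ C := by
  rw [starEdges_subset_iff]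
  intro x hx y hy hxy
  simp only [mem_insert, mem_singleton] at hx hy
  rcases hx with rfl | rfl | rfl <;> rcases hy with rfl | rfl | rfl <;>
    first | exact absurd rfl hxy | assumption | (rw [pair_comm]; assumption)

theorem biUnion_starEdges_subset (v : V) (S : Finset V) :
    (starEdges v S).biUnion id ⊆ insert v S := by
  intro x hx
  obtain ⟨_, hf, hxf⟩ := mem_biUnion.mp hx
  obtain ⟨a, ha, b, hb, -, rfl⟩ := mem_starEdges.mp hf
  simp only [id_eq, mem_insert, mem_singleton] at hxf
  rcases hxf with rfl | rfl | rfl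
  exacts [mem_insert_self _ _, mem_insert_of_mem ha, mem_insert_of_mem hb]

theorem exists_mem_starEdges {v : V} {S : Finset V} (hS : 2 ≤ #S) {x y : V}
    (hx : x ∈ insert v S) (hy : y ∈ insert v S) (hxy : x ≠ y) :
    ∃ f ∈ starEdges v S, x ∈ f ∧ y ∈ f := by
  have key : ∀ {x y}, x = v → y ∈ S → ∃ f ∈ starEdges v S, x ∈ f ∧ y ∈ f := by
    rintro x y rfl hy
    obtain ⟨z, hz, hzy⟩ := exists_mem_ne hS y
    exact ⟨_, mem_starEdges.mpr ⟨y, hy, z, hz, hzy.symm, rfl⟩, by simp, by simp⟩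
  rcases mem_insert.mp hx with hx | hx <;> rcases mem_insert.mp hy with hy | hy
  · exact absurd (hx.trans hy.symm) hxy
  · exact key hx hy
  · obtain ⟨f, hf, hyf, hxf⟩ := key hy hx
    exact ⟨f, hf, hxf, hyf⟩
  · exact ⟨_, mem_starEdges.mpr ⟨x, hx, y, hy, hxy, rfl⟩, by simp, by simp⟩

variable (h3 : ∀ e ∈ H, #e = 3)
  (hfree : ∀ X : Finset V, #X = 4 → spanCount H X ≠ 2 ∧ spanCount H X ≠ 4)
include h3 hfree

theorem notMem_of_star_three {v α β γ w : V} (hαβ : {v, α, β} ∈ H) (hαγ : {v, α, γ} ∈ H)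
    (hβγ : {v, β, γ} ∈ H) (hw : w ∉ ({v, α, β, γ} : Finset V)) : {α, β, w} ∉ H := by
  -- Parity on `{v, α, β, γ}` excludes `{α, β, γ}`; on `{v, α, β, w}` it makes exactly one of
  -- `{v, α, w}`, `{v, β, w}` an edge; on the remaining three 4-sets it forces them to agree.
  intro hαβw
  have := ne_of_card_eq_three (h3 _ hαβ)
  have := ne_of_card_eq_three (h3 _ hαγ)
  have := ne_of_card_eq_three (h3 _ hβγ)
  have p₁ := edge_parity h3 hfree hαβ (d := γ) (by grind)
  have p₂ := edge_parity h3 hfree hαβ (d := w) (by grind)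
  have p₃ := edge_parity h3 hfree hβγ (d := w) (by grind)
  have p₄ := edge_parity h3 hfree hαγ (d := w) (by grind)
  have p₅ := edge_parity h3 hfree hαβw (d := γ) (by grind)
  rw [pair_comm w γ] at p₅
  simp only [hαγ, hβγ, hαβw, true_iff, not_true_eq_false, iff_false] at p₁ p₂
  simp only [p₁, false_iff, not_iff, not_iff_not] at p₅
  rw [p₅] at p₄
  exact iff_not_self ((p₄.trans p₃.symm).symm.trans p₂)

theorem notMem_of_starEdges_subset {v : V} {S : Finset V} (hS : starEdges v S ⊆ H)
    (hvS : v ∉ S) (hcard : 3 ≤ #S) {α β w : V} (hα : α ∈ S) (hβ : β ∈ S) (hαβ : α ≠ β)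
    (hwv : w ≠ v) : {α, β, w} ∉ H := by
  intro h
  obtain ⟨-, hαw, hβw⟩ := ne_of_card_eq_three (h3 _ h)
  have hstar := starEdges_subset_iff.mp hS
  have hvα : v ≠ α := fun h => hvS (h ▸ hα)
  have hvβ : v ≠ β := fun h => hvS (h ▸ hβ)
  by_cases hw : w ∈ S
  · have := edge_parity h3 hfree (hstar α hα β hβ hαβ) (d := w) (by grind)
    simp [hstar α hα w hw hαw, hstar β hβ w hw hβw, h] at this
  · obtain ⟨γ, hγ, hγαβ⟩ := exists_mem_notMem_of_card_lt_card
      ((card_le_two (a := α) (b := β)).trans_lt hcard)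
    have hvγ : v ≠ γ := fun h => hvS (h ▸ hγ)
    have hwγ : w ≠ γ := fun h => hw (h ▸ hγ)
    exact notMem_of_star_three h3 hfree (hstar α hα β hβ hαβ) (hstar α hα γ hγ (by grind))
      (hstar β hβ γ hγ (by grind)) (by grind) h

theorem starEdges_insert_subset (hC : IsTightComponent H C) {v : V} {S : Finset V}
    (hS : starEdges v S ⊆ C) (hvS : v ∉ S) (hcard : 3 ≤ #S) {s w : V} (hs : s ∈ S)
    (hw : w ∉ insert v S) (hsw : {v, s, w} ∈ C) : starEdges v (insert w S) ⊆ C := by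
  obtain ⟨hwv, hwS⟩ : w ≠ v ∧ w ∉ S := by simpa [not_or] using hw
  have hstar := starEdges_subset_iff.mp hS
  have hnew : ∀ t ∈ S, {v, t, w} ∈ C := by
    intro t ht
    rcases eq_or_ne t s with rfl | hts
    · exact hsw
    have hvst := hC.2.1 (hstar s hs t ht hts.symm)
    have := ne_of_card_eq_three (h3 _ hvst)
    have hparity := edge_parity h3 hfree hvst (d := w) (by grind)
    have hvtw : {v, t, w} ∈ H := (hparity.mp (hC.2.1 hsw)).mpr
      (notMem_of_starEdges_subset h3 hfree (hS.trans hC.2.1) hvS hcard hs ht hts.symm hwv)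
    rw [pair_comm] at hsw ⊢
    exact hC.mem_of_adjacent h3 hsw (by rwa [pair_comm]) hts.symm
  rw [starEdges_subset_iff]
  intro a ha b hb hab
  rcases mem_insert.mp ha with rfl | haS <;> rcases mem_insert.mp hb with rfl | hbS
  · exact absurd rfl hab
  · rw [pair_comm]; exact hnew _ hbS
  · exact hnew _ haS
  · exact hstar a haS b hbS hab

theorem mem_starEdges_of_tightStep (hC : IsTightComponent H C) {v : V} {S : Finset V}
    (hS : starEdges v S ⊆ C) (hvS : v ∉ S) (hcard : 3 ≤ #S)
    (hmax : ∀ s ∈ S, ∀ w, {v, s, w} ∈ C → w ∈ insert v S) {e f : Finset V}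
    (he : e ∈ starEdges v S) (hef : tightStep H e f) : f ∈ starEdges v S := by
  obtain ⟨a, ha, b, hb, hab, rfl⟩ := mem_starEdges.mp he
  have hfC : f ∈ C := hC.mem_of_tightConn (hS he) hef.2.1 (.single hef)
  obtain ⟨u, hu, w, hw, rfl⟩ := exists_eq_insert_erase_of_card_inter (s := {v, a, b}) (t := f)
    (by rw [h3 _ hef.1, h3 _ hef.2.1]) (by rw [hef.2.2, h3 _ hef.1])
  have hva : v ≠ a := fun h => hvS (h ▸ ha)
  have hvb : v ≠ b := fun h => hvS (h ▸ hb)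
  simp only [mem_insert, mem_singleton, not_or] at hu hw
  obtain ⟨hwv, hwa, hwb⟩ := hw
  rcases hu with rfl | rfl | rfl
  · rw [erase_insert (by simp [hva, hvb])] at hfC
    refine absurd (hC.2.1 hfC) ?_
    rw [insert_comm w a, pair_comm w b]
    exact notMem_of_starEdges_subset h3 hfree (hS.trans hC.2.1) hvS hcard ha hb hab hwv
  · rw [erase_insert_of_ne hva, erase_insert (by simp [hab]), insert_comm w v, pair_comm w b]
      at hfC ⊢
    have hwS := hmax b hb w hfC
    exact mem_starEdges.mpr ⟨b, hb, w, (mem_insert.mp hwS).resolve_left hwv, Ne.symm hwb, rfl⟩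
  · rw [erase_insert_of_ne hvb, erase_insert_of_ne hab, erase_singleton, insert_empty_eq,
      insert_comm w v, pair_comm w a] at hfC ⊢
    have hwS := hmax a ha w hfC
    exact mem_starEdges.mpr ⟨a, ha, w, (mem_insert.mp hwS).resolve_left hwv, Ne.symm hwa, rfl⟩

theorem exists_starEdges_subset_of_adjacent (hC : IsTightComponent H C) {p q r s : V}
    (hr : {p, q, r} ∈ C) (hs : {p, q, s} ∈ C) (hsr : s ∉ ({p, q, r} : Finset V)) :
    ∃ v S, v ∉ S ∧ 3 ≤ #S ∧ starEdges v S ⊆ C := by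
  have hrH := hC.2.1 hr
  obtain ⟨hpq, hpr, hqr⟩ := ne_of_card_eq_three (h3 _ hrH)
  obtain ⟨-, hps, hqs⟩ := ne_of_card_eq_three (h3 _ (hC.2.1 hs))
  have hrs : r ≠ s := fun h => hsr (by simp [h])
  have hparity := (edge_parity h3 hfree hrH hsr).mp (hC.2.1 hs)
  by_cases hprs : {p, r, s} ∈ H
  · refine ⟨p, {q, r, s}, by simp [hpq, hpr, hps],
      (card_eq_three.mpr ⟨q, r, s, hqr, hqs, hrs, rfl⟩).ge, starEdges_three_subset hr hs ?_⟩
    rw [pair_comm] at hr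
    exact hC.mem_of_adjacent h3 hr hprs hqs
  · have hqrs : {q, r, s} ∈ H := by_contra fun h => hprs (hparity.mpr h)
    rw [insert_comm] at hr hs
    refine ⟨q, {p, r, s}, by simp [hpq.symm, hqr, hqs],
      (card_eq_three.mpr ⟨p, r, s, hpr, hps, hrs, rfl⟩).ge, starEdges_three_subset hr hs ?_⟩
    rw [pair_comm] at hr
    exact hC.mem_of_adjacent h3 hr hqrs hps

theorem exists_starEdges_subset (hC : IsTightComponent H C) {e f : Finset V} (he : e ∈ C)
    (hf : f ∈ C) (hef : e ≠ f) : ∃ v S, v ∉ S ∧ 3 ≤ #S ∧ starEdges v S ⊆ C := by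
  obtain ⟨g, hstep, -⟩ :=
    (Relation.ReflTransGen.cases_head (hC.2.2.2 e he f hf)).resolve_left hef
  have hg : g ∈ C := hC.mem_of_tightConn he hstep.2.1 (.single hstep)
  obtain ⟨u, hu, w, hw, rfl⟩ := exists_eq_insert_erase_of_card_inter (s := e) (t := g)
    (by rw [h3 _ hstep.1, h3 _ hstep.2.1]) (by rw [hstep.2.2, h3 _ hstep.1])
  obtain ⟨p, q, -, hpq⟩ :=
    card_eq_two.mp (by rw [card_erase_of_mem hu, h3 _ hstep.1] : #(e.erase u) = 2)
  have he' : e = {p, q, u} := by rw [← insert_erase hu, hpq, insert_comm u p, pair_comm u q]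
  rw [hpq, insert_comm w p, pair_comm w q] at hg
  subst he'
  exact exists_starEdges_subset_of_adjacent h3 hfree hC he hg hw

theorem exists_maximal_starEdges (hC : IsTightComponent H C)
    (h : ∃ v S, v ∉ S ∧ 3 ≤ #S ∧ starEdges v S ⊆ C) :
    ∃ v S, v ∉ S ∧ 3 ≤ #S ∧ starEdges v S ⊆ C ∧
      ∀ s ∈ S, ∀ w, {v, s, w} ∈ C → w ∈ insert v S := by
  obtain ⟨v, S₀, hvS₀, hS₀, hS₀C⟩ := h
  have hbound : ∀ {S}, v ∉ S → 3 ≤ #S → starEdges v S ⊆ C → S ⊆ C.biUnion id := by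
    intro S hvS hS hSC x hx
    obtain ⟨f, hf, hxf, -⟩ := exists_mem_starEdges (by omega) (mem_insert_of_mem hx)
      (mem_insert_self v S) (fun h => hvS (h ▸ hx))
    exact mem_biUnion.mpr ⟨f, hSC hf, hxf⟩
  let 𝒮 := (C.biUnion id).powerset.filter fun S => v ∉ S ∧ 3 ≤ #S ∧ starEdges v S ⊆ C
  have mem_𝒮 : ∀ {S}, v ∉ S → 3 ≤ #S → starEdges v S ⊆ C → S ∈ 𝒮 := fun hvS hS hSC =>
    mem_filter.mpr ⟨mem_powerset.mpr (hbound hvS hS hSC), hvS, hS, hSC⟩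
  obtain ⟨S, hS, hmax⟩ := exists_max_image 𝒮 card ⟨S₀, mem_𝒮 hvS₀ hS₀ hS₀C⟩
  obtain ⟨-, hvS, hcard, hSC⟩ := mem_filter.mp hS
  refine ⟨v, S, hvS, hcard, hSC, fun s hs w hsw => ?_⟩
  by_contra hw
  obtain ⟨hwv, hwS⟩ : w ≠ v ∧ w ∉ S := by simpa [not_or] using hw
  have hlarger := hmax _ (mem_𝒮 (by simp [hvS, hwv.symm])
    (hcard.trans (card_le_card (subset_insert w S)))
    (starEdges_insert_subset h3 hfree hC hSC hvS hcard hs hw hsw))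
  rw [card_insert_of_notMem hwS] at hlarger
  omega

theorem IsTightComponent.exists_eq_starEdges (hC : IsTightComponent H C) {e f : Finset V}
    (he : e ∈ C) (hf : f ∈ C) (hef : e ≠ f) : ∃ v S, 2 ≤ #S ∧ C = starEdges v S := by
  obtain ⟨v, S, hvS, hcard, hSC, hmax⟩ :=
    exists_maximal_starEdges h3 hfree hC (exists_starEdges_subset h3 hfree hC he hf hef)
  refine ⟨v, S, by omega, Subset.antisymm (fun g hg => ?_) hSC⟩
  obtain ⟨a, ha, b, hb, hab⟩ := one_lt_card.mp (by omega : 1 < #S)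
  have hab : {v, a, b} ∈ starEdges v S := mem_starEdges.mpr ⟨a, ha, b, hb, hab, rfl⟩
  have hconn := hC.2.2.2 _ (hSC hab) g hg
  clear hg
  induction hconn with
  | refl => exact hab
  | tail _ hstep ih => exact mem_starEdges_of_tightStep h3 hfree hC hSC hvS hcard hmax ih hstep

theorem IsTightComponent.exists_mem_of_mem_biUnion (hC : IsTightComponent H C) {x y : V}
    (hx : x ∈ C.biUnion id) (hy : y ∈ C.biUnion id) (hxy : x ≠ y) :
    ∃ f ∈ C, x ∈ f ∧ y ∈ f := by
  obtain ⟨e, he, hxe⟩ := mem_biUnion.mp hx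
  obtain ⟨f, hf, hyf⟩ := mem_biUnion.mp hy
  by_cases hef : e = f
  · exact ⟨e, he, hxe, hef ▸ hyf⟩
  obtain ⟨v, S, hS, rfl⟩ := hC.exists_eq_starEdges h3 hfree he hf hef
  exact exists_mem_starEdges hS (biUnion_starEdges_subset v S hx)
    (biUnion_starEdges_subset v S hy) hxy

end Star

theorem stmt_5 {V : Type*} [DecidableEq V] (H : Finset (Finset V))
    (h3 : ∀ e ∈ H, e.card = 3)
    (hfree : ∀ X : Finset V, X.card = 4 → spanCount H X ≠ 2 ∧ spanCount H X ≠ 4)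
    (C₁ C₂ : Finset (Finset V))
    (h₁ : IsTightComponent H C₁) (h₂ : IsTightComponent H C₂) (hne : C₁ ≠ C₂) :
    ((C₁.biUnion id) ∩ (C₂.biUnion id)).card ≤ 1 := by
  by_contra! hcard
  obtain ⟨x, hx, y, hy, hxy⟩ := one_lt_card.mp hcard
  rw [mem_inter] at hx hy
  obtain ⟨f₁, hf₁, hx₁, hy₁⟩ := h₁.exists_mem_of_mem_biUnion h3 hfree hx.1 hy.1 hxy
  obtain ⟨f₂, hf₂, hx₂, hy₂⟩ := h₂.exists_mem_of_mem_biUnion h3 hfree hx.2 hy.2 hxy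
  have hshared : 2 ≤ #(f₁ ∩ f₂) := card_pair hxy ▸ card_le_card (by
    simp [insert_subset_iff, hx₁, hx₂, hy₁, hy₂])
  have hconn := tightConn_of_two_le_card_inter h3 (h₁.2.1 hf₁) (h₂.2.1 hf₂) hshared
  exact hne (h₁.eq_of_mem h₂ (h₁.mem_of_tightConn hf₁ (h₂.2.1 hf₂) hconn) hf₂)
end

section
/- Every n-vertex 3-uniform hypergraph in which no 4 vertices span exactly 2 edges and no 4 vertices span exactly 4 edges has at most C(n-1, 2) edges. -/
open Finset

/-!
Call `a ∈ e` an apex of the edge `e` if every edge meeting `e` in two vertices contains `a`.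
Every edge has an apex: if `{c,u,v}` and `{d,u,v}` are edges, the 4-set `{c,d,u,v}` spans three
edges, so exactly one of `{d,c,u}`, `{d,c,v}` is an edge, say the first; then `u` is an apex of
`{c,u,v}`, by a parity count on five vertices.

Removing its apex maps each edge to a pair, injectively, and no pair in the image contains the
apex of an edge together with another vertex of that edge. So every pair in the image is joined
by a path of length two in the graph of the pairs outside the image, which is therefore connected
and has at least `n - 1` edges. Hence `|H| ≤ C(n, 2) - (n - 1) = C(n - 1, 2)`.
-/

lemma Nat.choose_two_eq_choose_two_pred_add (n : ℕ) :
    n.choose 2 = (n - 1).choose 2 + (n - 1) := by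
  cases n with
  | zero => rfl
  | succ m => rw [Nat.choose_succ_succ, Nat.choose_one_right, Nat.add_sub_cancel, add_comm]

section

variable {V : Type*} [DecidableEq V]

lemma Sym2.toFinset_injective : Function.Injective (Sym2.toFinset : Sym2 V → Finset V) :=
  fun z w h => Sym2.ext fun x => by rw [← Sym2.mem_toFinset, h, Sym2.mem_toFinset]

theorem Finset.powersetCard_card_sub_one {X : Finset V} (hX : X.Nonempty) :
    X.powersetCard (#X - 1) = X.image X.erase := by
  ext S
  rw [mem_powersetCard, mem_image]
  constructor
  · rintro ⟨hSX, hS⟩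
    have hcard : #(X \ S) = 1 := by
      rw [card_sdiff_of_subset hSX]
      have := hX.card_pos
      omega
    obtain ⟨x, hx⟩ := card_eq_one.mp hcard
    refine ⟨x, (mem_sdiff.mp (hx ▸ mem_singleton_self x)).1, ?_⟩
    rw [erase_eq, ← hx, sdiff_sdiff_eq_self hSX]
  · rintro ⟨x, hx, rfl⟩
    exact ⟨erase_subset x X, card_erase_of_mem hx⟩

lemma Finset.exists_eq_insert_inter {e f : Finset V} (he : #e = #(e ∩ f) + 1) :
    ∃ c ∉ f, e = insert c (e ∩ f) := by
  obtain ⟨c, hce, hcef⟩ := exists_mem_notMem_of_card_lt_card (s := e ∩ f) (t := e) (by omega)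
  have hcf : c ∉ f := fun hcf => hcef (mem_inter.mpr ⟨hce, hcf⟩)
  refine ⟨c, hcf, (eq_of_subset_of_card_le (insert_subset hce inter_subset_left) ?_).symm⟩
  rw [card_insert_of_notMem hcef]
  omega

lemma Set.Sized.card_inter_lt {r : ℕ} {A : Set (Finset V)} (hA : A.Sized r) {e f : Finset V}
    (he : e ∈ A) (hf : f ∈ A) (hne : e ≠ f) : #(e ∩ f) < r := by
  by_contra! h
  have hinter : e ∩ f = e :=
    Finset.eq_of_subset_of_card_le Finset.inter_subset_left (by rw [hA he]; omega)
  exact hA.isAntichain he hf hne (hinter ▸ Finset.inter_subset_right)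

lemma spanCount_eq_card_filter_erase (H : Finset (Finset V)) {X : Finset V} (hX : #X = 4) :
    spanCount H X = #{x ∈ X | X.erase x ∈ H} := by
  rw [spanCount, show 3 = #X - 1 by omega, powersetCard_card_sub_one (card_pos.mp (by omega)),
    filter_image, card_image_of_injOn (X.erase_injOn.mono (filter_subset _ _))]

lemma spanCount_quad (H : Finset (Finset V)) {a b c d : V} (hab : a ≠ b) (hac : a ≠ c)
    (had : a ≠ d) (hbc : b ≠ c) (hbd : b ≠ d) (hcd : c ≠ d) :
    spanCount H {a, b, c, d} =
      (if {a, b, c} ∈ H then 1 else 0) + (if {a, b, d} ∈ H then 1 else 0) +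
      (if {a, c, d} ∈ H then 1 else 0) + (if {b, c, d} ∈ H then 1 else 0) := by
  rw [spanCount_eq_card_filter_erase H (by simp [*]), card_filter,
    sum_insert (by simp [*]), sum_insert (by simp [*]), sum_pair hcd]
  simp [erase_insert_of_ne, *]
  omega

def SpansNoTwoOrFour (H : Finset (Finset V)) : Prop :=
  ∀ X : Finset V, #X = 4 → spanCount H X ≠ 2 ∧ spanCount H X ≠ 4

def IsApex (H : Finset (Finset V)) (e : Finset V) (a : V) : Prop :=
  a ∈ e ∧ ∀ f ∈ H, #(e ∩ f) = 2 → a ∈ f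

namespace SpansNoTwoOrFour

variable {H : Finset (Finset V)}

lemma quad_sum_eq_zero_or_one_or_three (hH : SpansNoTwoOrFour H) {a b c d : V} (hab : a ≠ b)
    (hac : a ≠ c) (had : a ≠ d) (hbc : b ≠ c) (hbd : b ≠ d) (hcd : c ≠ d) :
    let s := (if {a, b, c} ∈ H then 1 else 0) + (if {a, b, d} ∈ H then 1 else 0) +
      (if {a, c, d} ∈ H then 1 else 0) + (if {b, c, d} ∈ H then 1 else 0)
    s = 0 ∨ s = 1 ∨ s = 3 := by
  intro s
  have hX : #{a, b, c, d} = 4 := by simp [*]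
  have hle : spanCount H {a, b, c, d} ≤ 4 :=
    spanCount_eq_card_filter_erase H hX ▸ hX ▸ card_filter_le _ _
  have h24 := hH _ hX
  rw [spanCount_quad H hab hac had hbc hbd hcd] at hle h24
  omega

lemma mem_iff_notMem (hH : SpansNoTwoOrFour H) {a b c d : V} (hab : a ≠ b) (hac : a ≠ c)
    (had : a ≠ d) (hbc : b ≠ c) (hbd : b ≠ d) (hcd : c ≠ d)
    (hacd : {a, c, d} ∈ H) (hbcd : {b, c, d} ∈ H) : {a, b, c} ∈ H ↔ {a, b, d} ∉ H := by
  have := hH.quad_sum_eq_zero_or_one_or_three hab hac had hbc hbd hcd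
  by_cases habc : {a, b, c} ∈ H <;> by_cases habd : {a, b, d} ∈ H <;> simp_all

lemma notMem_of_star (hH : SpansNoTwoOrFour H) {w a b c d : V} (hwa : w ≠ a) (hwb : w ≠ b)
    (hwc : w ≠ c) (hwd : w ≠ d) (hab : a ≠ b) (hac : a ≠ c) (had : a ≠ d) (hbc : b ≠ c)
    (hbd : b ≠ d) (hcd : c ≠ d) (habc : {a, b, c} ∈ H) (hacd : {a, c, d} ∈ H)
    (hbcd : {b, c, d} ∈ H) : {w, b, d} ∉ H := by
  intro hwbd
  -- Each 4-set through `w` contains one of the four given edges, so spans 1 or 3 edges, and the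
  -- sum over these four 4-sets is even. But it counts each edge through `w` twice and each of the
  -- three edges inside `{a, b, c, d}` once.
  have := hH.quad_sum_eq_zero_or_one_or_three hab hac had hbc hbd hcd
  have := hH.quad_sum_eq_zero_or_one_or_three hwa hwb hwc hab hac hbc
  have := hH.quad_sum_eq_zero_or_one_or_three hwa hwb hwd hab had hbd
  have := hH.quad_sum_eq_zero_or_one_or_three hwa hwc hwd hac had hcd
  have := hH.quad_sum_eq_zero_or_one_or_three hwb hwc hwd hbc hbd hcd
  simp only [if_pos habc, if_pos hacd, if_pos hbcd, if_pos hwbd] at *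
  omega

lemma isApex_of_mem (hH : SpansNoTwoOrFour H) (hH3 : (H : Set (Finset V)).Sized 3)
    {c d u v : V} (hcd : c ≠ d) (hcu : c ≠ u) (hcv : c ≠ v) (hdu : d ≠ u) (hdv : d ≠ v)
    (huv : u ≠ v) (hcuv : {c, u, v} ∈ H) (hduv : {d, u, v} ∈ H) (hdcu : {d, c, u} ∈ H) :
    IsApex H {c, u, v} u := by
  refine ⟨by simp, fun f hf hcard => ?_⟩
  by_contra huf
  have hinter : {c, u, v} ∩ f = {c, v} := by
    refine eq_of_subset_of_card_le (fun x hx => ?_) (by rw [hcard, card_pair hcv])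
    obtain ⟨hx, hxf⟩ := mem_inter.mp hx
    simp only [mem_insert, mem_singleton] at hx ⊢
    rcases hx with rfl | rfl | rfl
    exacts [Or.inl rfl, absurd hxf huf, Or.inr rfl]
  obtain ⟨w, hw, hfw⟩ := exists_eq_insert_inter (e := f) (f := {c, u, v})
    (by rw [hH3 hf, inter_comm, hcard])
  rw [inter_comm, hinter] at hfw
  simp only [mem_insert, mem_singleton, not_or] at hw
  obtain ⟨hwc, hwu, hwv⟩ := hw
  rw [hfw] at hf
  by_cases hwd : w = d
  · subst hwd
    exact (hH.mem_iff_notMem (Ne.symm hcd) hdu hdv hcu hcv huv hduv hcuv).mp hdcu hf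
  · exact hH.notMem_of_star hwd hwc hwu hwv (Ne.symm hcd) hdu hdv hcu hcv huv hdcu hduv hcuv hf

lemma exists_isApex (hH : SpansNoTwoOrFour H) (hH3 : (H : Set (Finset V)).Sized 3)
    {e : Finset V} (he : e ∈ H) : ∃ a, IsApex H e a := by
  by_cases hnb : ∃ f ∈ H, #(e ∩ f) = 2
  swap
  · obtain ⟨a, ha⟩ := card_pos.mp (by rw [hH3 he]; norm_num : 0 < #e)
    exact ⟨a, ha, fun f hf hcard => (hnb ⟨f, hf, hcard⟩).elim⟩
  obtain ⟨f, hf, hcard⟩ := hnb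
  obtain ⟨c, hcf, hec⟩ := exists_eq_insert_inter (e := e) (f := f) (by rw [hH3 he, hcard])
  obtain ⟨d, hde, hfd⟩ := exists_eq_insert_inter (e := f) (f := e)
    (by rw [hH3 hf, inter_comm, hcard])
  obtain ⟨u, v, huv, hinter⟩ := card_eq_two.mp hcard
  rw [hinter] at hec
  rw [inter_comm, hinter] at hfd
  subst hec hfd
  simp only [mem_insert, mem_singleton, not_or] at hcf hde
  obtain ⟨hcd, hcu, hcv⟩ := hcf
  obtain ⟨-, hdu, hdv⟩ := hde
  by_cases hdcu : {d, c, u} ∈ H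
  · exact ⟨u, hH.isApex_of_mem hH3 hcd hcu hcv hdu hdv huv he hf hdcu⟩
  · have hdcv : {d, c, v} ∈ H := by
      by_contra hdcv
      exact hdcu ((hH.mem_iff_notMem (Ne.symm hcd) hdu hdv hcu hcv huv hf he).mpr hdcv)
    have := hH.isApex_of_mem hH3 hcd hcv hcu hdv hdu (Ne.symm huv) (by rwa [pair_comm])
      (by rwa [pair_comm]) hdcv
    exact ⟨v, by rwa [pair_comm] at this⟩

end SpansNoTwoOrFour

variable {H : Finset (Finset V)} {ap : Finset V → V}

lemma injOn_erase_apex (hH3 : (H : Set (Finset V)).Sized 3)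
    (hap : ∀ e ∈ H, IsApex H e (ap e)) :
    Set.InjOn (fun e => e.erase (ap e)) (H : Set (Finset V)) := by
  intro e he f hf (hef : e.erase (ap e) = f.erase (ap f))
  by_contra hne
  have hsub : e.erase (ap e) ⊆ e ∩ f :=
    subset_inter (erase_subset _ _) (hef ▸ erase_subset _ _)
  have hcard : #(e ∩ f) = 2 := by
    refine le_antisymm (Nat.le_of_lt_succ (hH3.card_inter_lt he hf hne)) ?_
    simpa [card_erase_of_mem (hap e he).1, hH3 he] using card_le_card hsub
  have hef : e ⊆ f := by
    rw [← insert_erase (hap e he).1]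
    exact insert_subset ((hap e he).2 f hf hcard) (hsub.trans inter_subset_right)
  exact hH3.isAntichain he hf hne hef

lemma pair_apex_notMem_image_erase_apex (hH3 : (H : Set (Finset V)).Sized 3)
    (hap : ∀ e ∈ H, IsApex H e (ap e)) {e : Finset V} (he : e ∈ H) {x : V}
    (hx : x ∈ e.erase (ap e)) : {ap e, x} ∉ H.image fun f => f.erase (ap f) := by
  rw [mem_image]
  rintro ⟨f, hf, hfe⟩
  have hxe : {ap e, x} ⊆ e :=
    insert_subset (hap e he).1 (singleton_subset_iff.mpr (mem_of_mem_erase hx))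
  have hne : e ≠ f := by
    rintro rfl
    exact notMem_erase (ap e) e (hfe ▸ mem_insert_self (ap e) {x})
  have hcard : #(f ∩ e) = 2 := by
    refine le_antisymm (Nat.le_of_lt_succ (hH3.card_inter_lt hf he hne.symm)) ?_
    rw [← card_pair (ne_of_mem_erase hx).symm]
    exact card_le_card (subset_inter (hfe ▸ erase_subset _ _) hxe)
  have hfe' : f ⊆ e := by
    rw [← insert_erase (hap f hf).1, hfe]
    exact insert_subset ((hap f hf).2 e he hcard) hxe
  exact hH3.isAntichain hf he hne.symm hfe'

variable [Fintype V]

lemma SimpleGraph.card_edgeFinset_add_card_le_choose_two (G : SimpleGraph V) [DecidableRel G.Adj]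
    {U : Finset (Finset V)} (hU : (U : Set (Finset V)).Sized 2)
    (hGU : ∀ x y, G.Adj x y → {x, y} ∉ U) :
    #G.edgeFinset + #U ≤ (Fintype.card V).choose 2 := by
  have hsub : G.edgeFinset.image Sym2.toFinset ⊆ powersetCard 2 univ \ U := by
    intro P hP
    obtain ⟨z, hz, rfl⟩ := mem_image.mp hP
    induction z with
    | h x y =>
      have hxy : G.Adj x y := G.mem_edgeFinset.mp hz
      rw [Sym2.toFinset_mk_eq, mem_sdiff, mem_powersetCard]
      exact ⟨⟨subset_univ _, card_pair hxy.ne⟩, hGU x y hxy⟩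
  have hUsub : U ⊆ powersetCard 2 univ :=
    fun P hP => mem_powersetCard.mpr ⟨subset_univ P, hU hP⟩
  have hE := card_le_card hsub
  rw [card_image_of_injective _ Sym2.toFinset_injective, card_sdiff_of_subset hUsub,
    card_powersetCard, card_univ] at hE
  have hU' := card_le_card hUsub
  rw [card_powersetCard, card_univ] at hU'
  omega

lemma card_le_choose_pred_two_of_forall_exists_notMem {U : Finset (Finset V)}
    (hU : (U : Set (Finset V)).Sized 2)
    (hcover : ∀ x y, {x, y} ∈ U → ∃ a, {x, a} ∉ U ∧ {a, y} ∉ U) :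
    #U ≤ (Fintype.card V - 1).choose 2 := by
  classical
  let G := SimpleGraph.fromRel fun x y : V => {x, y} ∉ U
  have hGU : ∀ x y, G.Adj x y → {x, y} ∉ U := by
    rintro x y ⟨-, h | h⟩
    exacts [h, pair_comm x y ▸ h]
  have hG : G.Preconnected := by
    intro x y
    by_cases hxy : {x, y} ∈ U
    · obtain ⟨a, hxa, hay⟩ := hcover x y hxy
      have hxa' : x ≠ a := by rintro rfl; exact hay hxy
      have hay' : a ≠ y := by rintro rfl; exact hxa hxy
      exact (SimpleGraph.Adj.reachable (G := G) ⟨hxa', Or.inl hxa⟩).trans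
        (SimpleGraph.Adj.reachable (G := G) ⟨hay', Or.inl hay⟩)
    · rcases eq_or_ne x y with rfl | hne
      · rfl
      · exact SimpleGraph.Adj.reachable (G := G) ⟨hne, Or.inl hxy⟩
  have hedges : Fintype.card V ≤ #G.edgeFinset + 1 := by
    rcases isEmpty_or_nonempty V with hV | hV
    · simp
    · have := (SimpleGraph.Connected.mk hG).card_vert_le_card_edgeSet_add_one
      rwa [Nat.card_eq_fintype_card, Nat.card_eq_fintype_card,
        ← SimpleGraph.edgeFinset_card] at this
  have := G.card_edgeFinset_add_card_le_choose_two hU hGU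
  rw [Nat.choose_two_eq_choose_two_pred_add] at this
  omega

end

theorem stmt_6 {V : Type*} [Fintype V] [DecidableEq V] (H : Finset (Finset V))
    (h3 : ∀ e ∈ H, e.card = 3)
    (hfree : ∀ X : Finset V, X.card = 4 → spanCount H X ≠ 2 ∧ spanCount H X ≠ 4) :
    H.card ≤ (Fintype.card V - 1).choose 2 := by
  obtain rfl | ⟨e₀, he₀⟩ := H.eq_empty_or_nonempty
  · simp
  obtain ⟨a₀, -⟩ := SpansNoTwoOrFour.exists_isApex hfree h3 he₀
  have : Nonempty V := ⟨a₀⟩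
  choose! ap hap using fun e (he : e ∈ H) => SpansNoTwoOrFour.exists_isApex hfree h3 he
  rw [← card_image_of_injOn (injOn_erase_apex h3 hap)]
  refine card_le_choose_pred_two_of_forall_exists_notMem ?_ fun x y hxy => ?_
  · intro P hP
    obtain ⟨e, he, rfl⟩ := mem_image.mp hP
    rw [card_erase_of_mem (hap e he).1, h3 e he]
  · obtain ⟨e, he, hexy⟩ := mem_image.mp hxy
    refine ⟨ap e, ?_, ?_⟩
    · rw [pair_comm]
      exact pair_apex_notMem_image_erase_apex h3 hap he (hexy ▸ mem_insert_self x {y})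
    · exact pair_apex_notMem_image_erase_apex h3 hap he
        (hexy ▸ mem_insert_of_mem (mem_singleton_self y))
end

section
/- Let H be a 3-uniform hypergraph in which no 4 vertices span exactly 2 edges and no 4 vertices span exactly 3 edges. Then any two maximal cliques of H intersect in at most one vertex. -/
open Finset

/-- `K` is a clique of the 3-graph `H`. -/
def IsClique3 {V : Type*} [DecidableEq V] (H : Finset (Finset V)) (K : Finset V) : Prop :=
  ∀ t : Finset V, t ⊆ K → t.card = 3 → t ∈ H

/-- `K` is a maximal clique of the 3-graph `H`. -/
def IsMaxClique3 {V : Type*} [DecidableEq V] (H : Finset (Finset V)) (K : Finset V) : Prop :=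
  IsClique3 H K ∧ ∀ K' : Finset V, IsClique3 H K' → K ⊆ K' → K' = K

lemma span_all {V : Type*} [DecidableEq V] (H : Finset (Finset V)) (X : Finset V)
    (hX : X.card = 4) (hf2 : spanCount H X ≠ 2) (hf3 : spanCount H X ≠ 3)
    (e₁ e₂ : Finset V) (h1 : e₁ ∈ H) (h2 : e₂ ∈ H) (hs1 : e₁ ⊆ X) (hs2 : e₂ ⊆ X)
    (hc1 : e₁.card = 3) (hc2 : e₂.card = 3) (hnee : e₁ ≠ e₂)
    (t : Finset V) (ht : t ⊆ X) (htc : t.card = 3) : t ∈ H := by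
  classical
  set F := (X.powersetCard 3).filter (· ∈ H) with hF
  have hsub : F ⊆ X.powersetCard 3 := filter_subset _ _
  have hm1 : e₁ ∈ F := by simp [hF, Finset.mem_powersetCard, hs1, hc1, h1]
  have hm2 : e₂ ∈ F := by simp [hF, Finset.mem_powersetCard, hs2, hc2, h2]
  have hpair : ({e₁, e₂} : Finset (Finset V)) ⊆ F := by
    intro z hz
    rcases Finset.mem_insert.mp hz with rfl | hz
    · exact hm1
    · rw [Finset.mem_singleton] at hz; exact hz ▸ hm2
  have h2le : 2 ≤ F.card := by
    calc 2 = ({e₁, e₂} : Finset (Finset V)).card := (Finset.card_pair hnee).symm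
    _ ≤ F.card := Finset.card_le_card hpair
  have hle : F.card ≤ 4 := by
    have := Finset.card_le_card hsub
    rwa [Finset.card_powersetCard, hX, show Nat.choose 4 3 = 4 by decide] at this
  have hf2' : F.card ≠ 2 := hf2
  have hf3' : F.card ≠ 3 := hf3
  have hcard : F.card = 4 := by omega
  have hEq : F = X.powersetCard 3 := by
    apply Finset.eq_of_subset_of_card_le hsub
    rw [hcard, Finset.card_powersetCard, hX, show Nat.choose 4 3 = 4 by decide]
  have htF : t ∈ F := by
    rw [hEq]; exact Finset.mem_powersetCard.mpr ⟨ht, htc⟩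
  exact (Finset.mem_filter.mp htF).2

set_option maxHeartbeats 1000000 in
theorem stmt_8 {V : Type*} [DecidableEq V] (H : Finset (Finset V))
    (h3 : ∀ e ∈ H, e.card = 3)
    (hfree : ∀ X : Finset V, X.card = 4 → spanCount H X ≠ 2 ∧ spanCount H X ≠ 3)
    (K₁ K₂ : Finset V) (h₁ : IsMaxClique3 H K₁) (h₂ : IsMaxClique3 H K₂)
    (hne : K₁ ≠ K₂) :
    (K₁ ∩ K₂).card ≤ 1 := by
  classical
  by_contra hcard
  push_neg at hcard
  obtain ⟨x, hx, y, hy, hxy⟩ := Finset.one_lt_card.mp hcard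
  have hx1 : x ∈ K₁ := (Finset.mem_inter.mp hx).1
  have hx2 : x ∈ K₂ := (Finset.mem_inter.mp hx).2
  have hy1 : y ∈ K₁ := (Finset.mem_inter.mp hy).1
  have hy2 : y ∈ K₂ := (Finset.mem_inter.mp hy).2
  -- helper: triples inside K₁ or K₂ are edges
  have sub3 : ∀ (K : Finset V), IsClique3 H K → ∀ a b c : V, a ∈ K → b ∈ K → c ∈ K →
      a ≠ b → a ≠ c → b ≠ c → ({a, b, c} : Finset V) ∈ H := by
    intro K hK a b c ha hb hc hab hac hbc
    apply hK
    · intro z hz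
      simp only [Finset.mem_insert, Finset.mem_singleton] at hz
      rcases hz with rfl | rfl | rfl <;> assumption
    · rw [Finset.card_insert_of_notMem (by simp [hab, hac]),
        Finset.card_insert_of_notMem (by simp [hbc]), Finset.card_singleton]
  -- Lemma A
  have A : ∀ a ∈ K₁, a ∉ K₂ → ∀ b ∈ K₂, b ∉ K₁ → ∀ s ∈ K₁ ∩ K₂,
      ({a, b, s} : Finset V) ∈ H := by
    intro a ha1 ha2 b hb2 hb1 s hs
    have hs1 : s ∈ K₁ := (Finset.mem_inter.mp hs).1
    have hs2 : s ∈ K₂ := (Finset.mem_inter.mp hs).2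
    obtain ⟨p, hp1, hp2, hps⟩ : ∃ p, p ∈ K₁ ∧ p ∈ K₂ ∧ p ≠ s := by
      by_cases hsx : s = x
      · subst hsx; exact ⟨y, hy1, hy2, fun h => hxy h.symm⟩
      · exact ⟨x, hx1, hx2, fun h => hsx h.symm⟩
    have hab : a ≠ b := fun h => ha2 (h ▸ hb2)
    have has : a ≠ s := fun h => ha2 (h ▸ hs2)
    have hap : a ≠ p := fun h => ha2 (h ▸ hp2)
    have hbs : b ≠ s := fun h => hb1 (h ▸ hs1)
    have hbp : b ≠ p := fun h => hb1 (h ▸ hp1)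
    have hsp : s ≠ p := fun h => hps h.symm
    have hX4 : ({a, b, s, p} : Finset V).card = 4 := by
      rw [Finset.card_insert_of_notMem (by simp [hab, has, hap]),
        Finset.card_insert_of_notMem (by simp [hbs, hbp]),
        Finset.card_insert_of_notMem (by simp [hsp]), Finset.card_singleton]
    have e1m : ({a, s, p} : Finset V) ∈ H := sub3 K₁ h₁.1 a s p ha1 hs1 hp1 has hap hsp
    have e2m : ({b, s, p} : Finset V) ∈ H := sub3 K₂ h₂.1 b s p hb2 hs2 hp2 hbs hbp hsp
    have hc1 : ({a, s, p} : Finset V).card = 3 := h3 _ e1m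
    have hc2 : ({b, s, p} : Finset V).card = 3 := h3 _ e2m
    have hne12 : ({a, s, p} : Finset V) ≠ ({b, s, p} : Finset V) := by
      intro h
      have : a ∈ ({b, s, p} : Finset V) := h ▸ (by simp)
      simp only [Finset.mem_insert, Finset.mem_singleton] at this
      rcases this with h' | h' | h' <;> [exact hab h'; exact has h'; exact hap h']
    refine span_all H {a, b, s, p} hX4 (hfree _ hX4).1 (hfree _ hX4).2
      {a, s, p} {b, s, p} e1m e2m ?_ ?_ hc1 hc2 hne12 {a, b, s} ?_ ?_
    · intro z hz; simp only [Finset.mem_insert, Finset.mem_singleton] at hz ⊢; tauto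
    · intro z hz; simp only [Finset.mem_insert, Finset.mem_singleton] at hz ⊢; tauto
    · intro z hz; simp only [Finset.mem_insert, Finset.mem_singleton] at hz ⊢; tauto
    · rw [Finset.card_insert_of_notMem (by simp [hab, has]),
        Finset.card_insert_of_notMem (by simp [hbs]), Finset.card_singleton]
  -- Lemma L
  have L : ∀ a ∈ K₁, a ∉ K₂ → ∀ b ∈ K₂, b ∉ K₁ → ∀ c ∈ K₁ ∪ K₂, a ≠ c → b ≠ c →
      ({a, b, c} : Finset V) ∈ H := by
    intro a ha1 ha2 b hb2 hb1 c hc hac hbc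
    have hab : a ≠ b := fun h => ha2 (h ▸ hb2)
    by_cases hc1 : c ∈ K₁ <;> by_cases hc2 : c ∈ K₂
    · exact A a ha1 ha2 b hb2 hb1 c (Finset.mem_inter.mpr ⟨hc1, hc2⟩)
    · -- c ∈ K₁ \ K₂
      have hax : a ≠ x := fun h => ha2 (h ▸ hx2)
      have hbx : b ≠ x := fun h => hb1 (h ▸ hx1)
      have hcx : c ≠ x := fun h => hc2 (h ▸ hx2)
      have hX4 : ({a, b, c, x} : Finset V).card = 4 := by
        rw [Finset.card_insert_of_notMem (by simp [hab, hac, hax]),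
          Finset.card_insert_of_notMem (by simp [hbc, hbx]),
          Finset.card_insert_of_notMem (by simp [hcx]), Finset.card_singleton]
      have e1m : ({a, c, x} : Finset V) ∈ H := sub3 K₁ h₁.1 a c x ha1 hc1 hx1 hac hax hcx
      have e2m : ({a, b, x} : Finset V) ∈ H :=
        A a ha1 ha2 b hb2 hb1 x (Finset.mem_inter.mpr ⟨hx1, hx2⟩)
      have hne12 : ({a, c, x} : Finset V) ≠ ({a, b, x} : Finset V) := by
        intro h
        have : c ∈ ({a, b, x} : Finset V) := h ▸ (by simp)
        simp only [Finset.mem_insert, Finset.mem_singleton] at this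
        rcases this with h' | h' | h' <;>
          [exact hac h'.symm; exact hbc h'.symm; exact hcx h']
      refine span_all H {a, b, c, x} hX4 (hfree _ hX4).1 (hfree _ hX4).2
        {a, c, x} {a, b, x} e1m e2m ?_ ?_ (h3 _ e1m) (h3 _ e2m) hne12 {a, b, c} ?_ ?_
      · intro z hz; simp only [Finset.mem_insert, Finset.mem_singleton] at hz ⊢; tauto
      · intro z hz; simp only [Finset.mem_insert, Finset.mem_singleton] at hz ⊢; tauto
      · intro z hz; simp only [Finset.mem_insert, Finset.mem_singleton] at hz ⊢; tauto
      · rw [Finset.card_insert_of_notMem (by simp [hab, hac]),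
          Finset.card_insert_of_notMem (by simp [hbc]), Finset.card_singleton]
    · -- c ∈ K₂ \ K₁
      have hc2' : c ∈ K₂ := by
        rcases Finset.mem_union.mp hc with h | h
        · exact absurd h hc1
        · exact h
      have hax : a ≠ x := fun h => ha2 (h ▸ hx2)
      have hbx : b ≠ x := fun h => hb1 (h ▸ hx1)
      have hcx : c ≠ x := fun h => hc1 (h ▸ hx1)
      have hX4 : ({a, b, c, x} : Finset V).card = 4 := by
        rw [Finset.card_insert_of_notMem (by simp [hab, hac, hax]),
          Finset.card_insert_of_notMem (by simp [hbc, hbx]),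
          Finset.card_insert_of_notMem (by simp [hcx]), Finset.card_singleton]
      have e1m : ({b, c, x} : Finset V) ∈ H := sub3 K₂ h₂.1 b c x hb2 hc2' hx2 hbc hbx hcx
      have e2m : ({a, b, x} : Finset V) ∈ H :=
        A a ha1 ha2 b hb2 hb1 x (Finset.mem_inter.mpr ⟨hx1, hx2⟩)
      have hne12 : ({b, c, x} : Finset V) ≠ ({a, b, x} : Finset V) := by
        intro h
        have : c ∈ ({a, b, x} : Finset V) := h ▸ (by simp)
        simp only [Finset.mem_insert, Finset.mem_singleton] at this
        rcases this with h' | h' | h' <;>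
          [exact hac h'.symm; exact hbc h'.symm; exact hcx h']
      refine span_all H {a, b, c, x} hX4 (hfree _ hX4).1 (hfree _ hX4).2
        {b, c, x} {a, b, x} e1m e2m ?_ ?_ (h3 _ e1m) (h3 _ e2m) hne12 {a, b, c} ?_ ?_
      · intro z hz; simp only [Finset.mem_insert, Finset.mem_singleton] at hz ⊢; tauto
      · intro z hz; simp only [Finset.mem_insert, Finset.mem_singleton] at hz ⊢; tauto
      · intro z hz; simp only [Finset.mem_insert, Finset.mem_singleton] at hz ⊢; tauto
      · rw [Finset.card_insert_of_notMem (by simp [hab, hac]),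
          Finset.card_insert_of_notMem (by simp [hbc]), Finset.card_singleton]
    · -- c in neither, contradiction
      exact absurd (Finset.mem_union.mp hc) (by tauto)
  -- The union is a clique
  have hclique : IsClique3 H (K₁ ∪ K₂) := by
    intro t hts htc
    by_cases ht1 : t ⊆ K₁
    · exact h₁.1 t ht1 htc
    by_cases ht2 : t ⊆ K₂
    · exact h₂.1 t ht2 htc
    obtain ⟨a, hat, ha2⟩ := Finset.not_subset.mp ht2
    obtain ⟨b, hbt, hb1⟩ := Finset.not_subset.mp ht1
    have ha1 : a ∈ K₁ := by
      rcases Finset.mem_union.mp (hts hat) with h | h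
      · exact h
      · exact absurd h ha2
    have hb2 : b ∈ K₂ := by
      rcases Finset.mem_union.mp (hts hbt) with h | h
      · exact absurd h hb1
      · exact h
    have hab : a ≠ b := fun h => ha2 (h ▸ hb2)
    have habt : ({a, b} : Finset V) ⊆ t := by
      intro z hz
      simp only [Finset.mem_insert, Finset.mem_singleton] at hz
      rcases hz with rfl | rfl <;> assumption
    have hsd : (t \ {a, b}).card = 1 := by
      rw [Finset.card_sdiff_of_subset habt, htc, Finset.card_pair hab]
    obtain ⟨c, hc⟩ := Finset.card_eq_one.mp hsd
    have hct : c ∈ t := by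
      have : c ∈ t \ {a, b} := hc ▸ Finset.mem_singleton_self c
      exact (Finset.mem_sdiff.mp this).1
    have hcab : c ∉ ({a, b} : Finset V) := by
      have : c ∈ t \ {a, b} := hc ▸ Finset.mem_singleton_self c
      exact (Finset.mem_sdiff.mp this).2
    simp only [Finset.mem_insert, Finset.mem_singleton, not_or] at hcab
    have hteq : t = ({a, b, c} : Finset V) := by
      have h1 : ({a, b} : Finset V) ∪ (t \ {a, b}) = t := Finset.union_sdiff_of_subset habt
      rw [hc] at h1
      rw [← h1]
      ext z
      simp only [Finset.mem_union, Finset.mem_insert, Finset.mem_singleton]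
      tauto
    rw [hteq]
    exact L a ha1 ha2 b hb2 hb1 c (hts hct) (Ne.symm hcab.1) (Ne.symm hcab.2)
  have he1 : K₁ ∪ K₂ = K₁ := h₁.2 _ hclique Finset.subset_union_left
  have he2 : K₁ ∪ K₂ = K₂ := h₂.2 _ hclique Finset.subset_union_right
  exact hne (he1 ▸ he2)
end

section
/- Let H be a 3-uniform hypergraph in which no 4 vertices span exactly 2 edges and no 4 vertices span exactly 3 edges. Suppose u, v are distinct vertices and S is their common neighborhood, i.e., the set of vertices x with {u,v,x} an edge. If |S| ≥ 2, then for all distinct x, y ∈ S, both {x,y,u} and {x,y,v} are edges of H, and moreover S is a clique in H (every triple inside S is an edge) whenever |S| ≥ 3. -/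
open Finset

lemma key_lemma {V : Type*} [DecidableEq V] (H : Finset (Finset V))
    (hfree : ∀ X : Finset V, X.card = 4 → spanCount H X ≠ 2 ∧ spanCount H X ≠ 3)
    (X : Finset V) (hX : X.card = 4) (a b c : Finset V)
    (ha : a ∈ X.powersetCard 3) (hb : b ∈ X.powersetCard 3) (hc : c ∈ X.powersetCard 3)
    (hab : a ≠ b) (haH : a ∈ H) (hbH : b ∈ H) : c ∈ H := by
  by_contra hcH
  set F := (X.powersetCard 3).filter (· ∈ H) with hF
  have h2 : 2 ≤ F.card := by
    have : ({a, b} : Finset (Finset V)) ⊆ F := by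
      intro z hz
      simp only [mem_insert, mem_singleton] at hz
      rcases hz with rfl | rfl <;> simp [hF, ha, hb, haH, hbH]
    calc 2 = ({a, b} : Finset (Finset V)).card := (card_pair hab).symm
    _ ≤ F.card := card_le_card this
  have h3 : F.card ≤ 3 := by
    have hsub : F ⊆ (X.powersetCard 3).erase c := by
      intro z hz
      simp only [hF, mem_filter] at hz
      refine mem_erase.2 ⟨?_, hz.1⟩
      rintro rfl; exact hcH hz.2
    have := card_le_card hsub
    have hcard4 : (X.powersetCard 3).card = 4 := by
      rw [card_powersetCard, hX]; rfl
    have herase : ((X.powersetCard 3).erase c).card = 3 := by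
      rw [card_erase_of_mem hc, hcard4]
    omega
  have := hfree X hX
  have : spanCount H X = 2 ∨ spanCount H X = 3 := by
    unfold spanCount; rw [← hF]; omega
  rcases this with h | h
  · exact (hfree X hX).1 h
  · exact (hfree X hX).2 h

theorem stmt_9 {V : Type*} [DecidableEq V] (H : Finset (Finset V))
    (h3 : ∀ e ∈ H, e.card = 3)
    (hfree : ∀ X : Finset V, X.card = 4 → spanCount H X ≠ 2 ∧ spanCount H X ≠ 3)
    (u v : V) (huv : u ≠ v) (S : Finset V)
    (hS : ∀ x : V, x ∈ S ↔ ({u, v, x} : Finset V) ∈ H)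
    (hcard : 2 ≤ S.card) :
    (∀ x ∈ S, ∀ y ∈ S, x ≠ y →
        ({x, y, u} : Finset V) ∈ H ∧ ({x, y, v} : Finset V) ∈ H) ∧
      (3 ≤ S.card → ∀ t : Finset V, t ⊆ S → t.card = 3 → t ∈ H) := by
  have huS : u ∉ S := by
    intro h
    have := h3 _ ((hS u).1 h)
    have : ({u, v, u} : Finset V).card ≤ 2 := by
      refine le_trans (card_le_card ?_) (card_pair huv).le
      intro z hz; simp only [mem_insert, mem_singleton] at hz ⊢; tauto
    omega
  have hvS : v ∉ S := by
    intro h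
    have := h3 _ ((hS v).1 h)
    have : ({u, v, v} : Finset V).card ≤ 2 := by
      refine le_trans (card_le_card ?_) (card_pair huv).le
      intro z hz; simp only [mem_insert, mem_singleton] at hz ⊢; tauto
    omega
  have part1 : ∀ x ∈ S, ∀ y ∈ S, x ≠ y →
      ({x, y, u} : Finset V) ∈ H ∧ ({x, y, v} : Finset V) ∈ H := by
    intro x hx y hy hxy
    have hxu : x ≠ u := fun h => huS (h ▸ hx)
    have hxv : x ≠ v := fun h => hvS (h ▸ hx)
    have hyu : y ≠ u := fun h => huS (h ▸ hy)
    have hyv : y ≠ v := fun h => hvS (h ▸ hy)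
    set X : Finset V := {u, v, x, y} with hXdef
    have hX4 : X.card = 4 := by
      rw [hXdef]
      rw [card_insert_of_notMem (by simp [huv, hxu.symm, hyu.symm]),
        card_insert_of_notMem (by simp [hxv.symm, hyv.symm]),
        card_insert_of_notMem (by simp [hxy]), card_singleton]
    have hmem : ∀ a b c : V, a ∈ X → b ∈ X → c ∈ X → a ≠ b → a ≠ c → b ≠ c →
        ({a, b, c} : Finset V) ∈ X.powersetCard 3 := by
      intro a b c ha hb hc h1 h2 h3'
      rw [mem_powersetCard]
      constructor
      · intro z hz; simp only [mem_insert, mem_singleton] at hz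
        rcases hz with rfl | rfl | rfl <;> assumption
      · rw [card_insert_of_notMem (by simp [h1, h2]),
          card_insert_of_notMem (by simp [h3']), card_singleton]
    have hu : u ∈ X := by simp [hXdef]
    have hv : v ∈ X := by simp [hXdef]
    have hxX : x ∈ X := by simp [hXdef]
    have hyX : y ∈ X := by simp [hXdef]
    have ha := hmem u v x hu hv hxX huv hxu.symm hxv.symm
    have hb := hmem u v y hu hv hyX huv hyu.symm hyv.symm
    have hcu := hmem x y u hxX hyX hu hxy hxu hyu
    have hcv := hmem x y v hxX hyX hv hxy hxv hyv
    have hane : ({u, v, x} : Finset V) ≠ ({u, v, y} : Finset V) := by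
      intro h
      have : x ∈ ({u, v, y} : Finset V) := h ▸ (by simp)
      simp only [mem_insert, mem_singleton] at this
      rcases this with h' | h' | h' <;> [exact hxu h'; exact hxv h'; exact hxy h']
    have haH := (hS x).1 hx
    have hbH := (hS y).1 hy
    exact ⟨key_lemma H hfree X hX4 _ _ _ ha hb hcu hane haH hbH,
      key_lemma H hfree X hX4 _ _ _ ha hb hcv hane haH hbH⟩
  refine ⟨part1, ?_⟩
  intro _ t htS ht3
  obtain ⟨x, y, z, hxy, hxz, hyz, rfl⟩ := card_eq_three.1 ht3
  have hx : x ∈ S := htS (by simp)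
  have hy : y ∈ S := htS (by simp)
  have hz : z ∈ S := htS (by simp)
  have hxu : x ≠ u := fun h => huS (h ▸ hx)
  have hyu : y ≠ u := fun h => huS (h ▸ hy)
  have hzu : z ≠ u := fun h => huS (h ▸ hz)
  set X : Finset V := {u, x, y, z} with hXdef
  have hX4 : X.card = 4 := by
    rw [hXdef]
    rw [card_insert_of_notMem (by simp [hxu.symm, hyu.symm, hzu.symm]),
      card_insert_of_notMem (by simp [hxy, hxz]),
      card_insert_of_notMem (by simp [hyz]), card_singleton]
  have hmem : ∀ a b c : V, a ∈ X → b ∈ X → c ∈ X → a ≠ b → a ≠ c → b ≠ c →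
      ({a, b, c} : Finset V) ∈ X.powersetCard 3 := by
    intro a b c ha hb hc h1 h2 h3'
    rw [mem_powersetCard]
    constructor
    · intro w hw; simp only [mem_insert, mem_singleton] at hw
      rcases hw with rfl | rfl | rfl <;> assumption
    · rw [card_insert_of_notMem (by simp [h1, h2]),
        card_insert_of_notMem (by simp [h3']), card_singleton]
  have huX : u ∈ X := by simp [hXdef]
  have hxX : x ∈ X := by simp [hXdef]
  have hyX : y ∈ X := by simp [hXdef]
  have hzX : z ∈ X := by simp [hXdef]
  have ha := hmem x y u hxX hyX huX hxy hxu hyu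
  have hb := hmem x z u hxX hzX huX hxz hxu hzu
  have hc := hmem x y z hxX hyX hzX hxy hxz hyz
  have hane : ({x, y, u} : Finset V) ≠ ({x, z, u} : Finset V) := by
    intro h
    have : y ∈ ({x, z, u} : Finset V) := h ▸ (by simp)
    simp only [mem_insert, mem_singleton] at this
    rcases this with h' | h' | h' <;> [exact hxy h'.symm; exact hyz h'; exact hyu h']
  have haH := (part1 x hx y hy hxy).1
  have hbH := (part1 x hx z hz hxz).1
  exact key_lemma H hfree X hX4 _ _ _ ha hb hc hane haH hbH
end

section
/- Let H be a 3-uniform hypergraph in which no 4 vertices span exactly 1 edge and no 4 vertices span exactly 3 edges. Let v be a vertex and let K be a set of vertices not containing v such that every pair in K together with v forms an edge of H (K is a clique in the link of v). If |K| ≥ 3, then K is a clique in H. Similarly, if no pair in K together with v forms an edge and |K| ≥ 3, then K is an independent set in H. -/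
open Finset

private lemma pcard3 {V : Type*} [DecidableEq V] {a b c d : V}
    (hab : a ≠ b) (hac : a ≠ c) (had : a ≠ d) (hbc : b ≠ c) (hbd : b ≠ d) (hcd : c ≠ d) :
    ({a,b,c,d} : Finset V).powersetCard 3 = {{a,b,c},{a,b,d},{a,c,d},{b,c,d}} := by
  ext s
  simp only [mem_powersetCard, mem_insert, mem_singleton]
  constructor
  · rintro ⟨hsub, hcd3⟩
    have hX : ({a,b,c,d} : Finset V).card = 4 := by
      simp [card_insert_of_notMem, hab, hac, had, hbc, hbd, hcd]
    have h1 : (({a,b,c,d} : Finset V) \ s).card = 1 := by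
      rw [card_sdiff_of_subset hsub, hX, hcd3]
    obtain ⟨w, hw⟩ := card_eq_one.mp h1
    have hs : s = ({a,b,c,d} : Finset V) \ {w} := by
      rw [← hw, sdiff_sdiff_right_self, inf_eq_inter, inter_eq_right.mpr hsub]
    have hwX : w ∈ ({a,b,c,d} : Finset V) := by
      have : w ∈ ({a,b,c,d} : Finset V) \ s := hw ▸ mem_singleton_self w
      exact (mem_sdiff.mp this).1
    simp only [mem_insert, mem_singleton] at hwX
    rcases hwX with rfl | rfl | rfl | rfl
    · right; right; right
      rw [hs]; ext x
      simp only [mem_sdiff, mem_insert, mem_singleton]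
      constructor
      · rintro ⟨h1, h2⟩; tauto
      · rintro (rfl | rfl | rfl) <;> simp_all [eq_comm]
    · right; right; left
      rw [hs]; ext x
      simp only [mem_sdiff, mem_insert, mem_singleton]
      constructor
      · rintro ⟨h1, h2⟩; tauto
      · rintro (rfl | rfl | rfl) <;> simp_all [eq_comm]
    · right; left
      rw [hs]; ext x
      simp only [mem_sdiff, mem_insert, mem_singleton]
      constructor
      · rintro ⟨h1, h2⟩; tauto
      · rintro (rfl | rfl | rfl) <;> simp_all [eq_comm]
    · left
      rw [hs]; ext x
      simp only [mem_sdiff, mem_insert, mem_singleton]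
      constructor
      · rintro ⟨h1, h2⟩; tauto
      · rintro (rfl | rfl | rfl) <;> simp_all [eq_comm]
  · rintro (rfl | rfl | rfl | rfl) <;>
      refine ⟨by intro x hx; simp only [mem_insert, mem_singleton] at hx ⊢; tauto, ?_⟩ <;>
      simp [card_insert_of_notMem, hab, hac, had, hbc, hbd, hcd]

theorem stmt_12 {V : Type*} [DecidableEq V] (H : Finset (Finset V))
    (h3 : ∀ e ∈ H, e.card = 3)
    (hfree : ∀ X : Finset V, X.card = 4 → spanCount H X ≠ 1 ∧ spanCount H X ≠ 3)
    (v : V) (K : Finset V) (hvK : v ∉ K) (hcard : 3 ≤ K.card) :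
    ((∀ x ∈ K, ∀ y ∈ K, x ≠ y → ({v, x, y} : Finset V) ∈ H) →
        ∀ t : Finset V, t ⊆ K → t.card = 3 → t ∈ H) ∧
      ((∀ x ∈ K, ∀ y ∈ K, x ≠ y → ({v, x, y} : Finset V) ∉ H) →
        ∀ t : Finset V, t ⊆ K → t ∉ H) := by
  constructor
  · intro hcl t htK ht3
    obtain ⟨x, y, z, hxy, hxz, hyz, rfl⟩ := card_eq_three.mp ht3
    have hx : x ∈ K := htK (by simp)
    have hy : y ∈ K := htK (by simp)
    have hz : z ∈ K := htK (by simp)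
    have hvx : v ≠ x := fun h => hvK (h ▸ hx)
    have hvy : v ≠ y := fun h => hvK (h ▸ hy)
    have hvz : v ≠ z := fun h => hvK (h ▸ hz)
    have e1 : ({v, x, y} : Finset V) ∈ H := hcl x hx y hy hxy
    have e2 : ({v, x, z} : Finset V) ∈ H := hcl x hx z hz hxz
    have e3 : ({v, y, z} : Finset V) ∈ H := hcl y hy z hz hyz
    by_contra hne
    have hX : ({v, x, y, z} : Finset V).card = 4 := by
      simp [card_insert_of_notMem, hvx, hvy, hvz, hxy, hxz, hyz]
    have d1 : ({v, x, y} : Finset V) ≠ {v, x, z} := by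
      intro h
      have : z ∈ ({v, x, y} : Finset V) := h ▸ (by simp)
      simp only [mem_insert, mem_singleton] at this
      rcases this with h' | h' | h' <;> simp_all [eq_comm]
    have d2 : ({v, x, y} : Finset V) ≠ {v, y, z} := by
      intro h
      have : x ∈ ({v, y, z} : Finset V) := h ▸ (by simp)
      simp only [mem_insert, mem_singleton] at this
      rcases this with h' | h' | h' <;> simp_all [eq_comm]
    have d3 : ({v, x, z} : Finset V) ≠ {v, y, z} := by
      intro h
      have : x ∈ ({v, y, z} : Finset V) := h ▸ (by simp)
      simp only [mem_insert, mem_singleton] at this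
      rcases this with h' | h' | h' <;> simp_all [eq_comm]
    have hsc : spanCount H {v, x, y, z} = 3 := by
      unfold spanCount
      rw [pcard3 hvx hvy hvz hxy hxz hyz]
      rw [filter_insert, filter_insert, filter_insert, filter_singleton]
      simp only [e1, e2, e3, hne, if_true, if_false, filter_empty]
      rw [card_insert_of_notMem (by simp [d1, d2]),
        card_insert_of_notMem (by simp [d3])]
      simp
    exact (hfree _ hX).2 hsc
  · intro hind t htK ht
    have ht3 := h3 t ht
    obtain ⟨x, y, z, hxy, hxz, hyz, rfl⟩ := card_eq_three.mp ht3
    have hx : x ∈ K := htK (by simp)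
    have hy : y ∈ K := htK (by simp)
    have hz : z ∈ K := htK (by simp)
    have hvx : v ≠ x := fun h => hvK (h ▸ hx)
    have hvy : v ≠ y := fun h => hvK (h ▸ hy)
    have hvz : v ≠ z := fun h => hvK (h ▸ hz)
    have e1 : ({v, x, y} : Finset V) ∉ H := hind x hx y hy hxy
    have e2 : ({v, x, z} : Finset V) ∉ H := hind x hx z hz hxz
    have e3 : ({v, y, z} : Finset V) ∉ H := hind y hy z hz hyz
    have hX : ({v, x, y, z} : Finset V).card = 4 := by
      simp [card_insert_of_notMem, hvx, hvy, hvz, hxy, hxz, hyz]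
    have hsc : spanCount H {v, x, y, z} = 1 := by
      unfold spanCount
      rw [pcard3 hvx hvy hvz hxy hxz hyz]
      rw [filter_insert, filter_insert, filter_insert, filter_singleton]
      simp only [e1, e2, e3, ht, if_true, if_false]
      exact card_singleton _
    exact (hfree _ hX).1 hsc
end

section
/- Every 3-uniform hypergraph H on n ≥ 4 vertices in which no 4 vertices span exactly 1 edge and no 4 vertices span exactly 3 edges has a clique or an independent set of size at least (1/2)·log₂ n. -/
open Finset

section aux
variable {V : Type*} [DecidableEq V]

lemma card3_aux {x y z : V} (hxy : x ≠ y) (hxz : x ≠ z) (hyz : y ≠ z) :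
    ({x, y, z} : Finset V).card = 3 := by
  rw [Finset.card_insert_of_notMem (by simp [hxy, hxz]),
    Finset.card_insert_of_notMem (by simp [hyz]), Finset.card_singleton]

lemma card4_aux {w x y z : V} (h1 : w ≠ x) (h2 : w ≠ y) (h3 : w ≠ z) (h4 : x ≠ y)
    (h5 : x ≠ z) (h6 : y ≠ z) : ({w, x, y, z} : Finset V).card = 4 := by
  rw [Finset.card_insert_of_notMem (by simp [h1, h2, h3]),
    Finset.card_insert_of_notMem (by simp [h4, h5]),
    Finset.card_insert_of_notMem (by simp [h6]), Finset.card_singleton]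

variable (H : Finset (Finset V))

lemma quadA {w a b c : V} (hwa : w ≠ a) (hwb : w ≠ b) (hwc : w ≠ c)
    (hab : a ≠ b) (hac : a ≠ c) (hbc : b ≠ c)
    (e1 : ({w, a, b} : Finset V) ∈ H) (e2 : ({w, a, c} : Finset V) ∈ H)
    (e3 : ({w, b, c} : Finset V) ∈ H)
    (hs : spanCount H {w, a, b, c} ≠ 3) : ({a, b, c} : Finset V) ∈ H := by
  set X : Finset V := {w, a, b, c} with hXdef
  have hX : X.card = 4 := card4_aux hwa hwb hwc hab hac hbc
  have hpow : (X.powersetCard 3).card = 4 := by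
    rw [Finset.card_powersetCard, hX]; rfl
  have hmem : ∀ s : Finset V, s ⊆ X → s.card = 3 → s ∈ X.powersetCard 3 := by
    intro s h1 h2; rw [Finset.mem_powersetCard]; exact ⟨h1, h2⟩
  set F : Finset (Finset V) := (X.powersetCard 3).filter (· ∈ H) with hFdef
  have hne1 : ({w, a, b} : Finset V) ≠ {w, a, c} := by
    intro h
    have hc : c ∈ ({w, a, b} : Finset V) := by rw [h]; simp
    simp only [Finset.mem_insert, Finset.mem_singleton] at hc
    rcases hc with h | h | h
    exacts [hwc h.symm, hac h.symm, hbc h.symm]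
  have hne2 : ({w, a, b} : Finset V) ≠ {w, b, c} := by
    intro h
    have hc : c ∈ ({w, a, b} : Finset V) := by rw [h]; simp
    simp only [Finset.mem_insert, Finset.mem_singleton] at hc
    rcases hc with h | h | h
    exacts [hwc h.symm, hac h.symm, hbc h.symm]
  have hne3 : ({w, a, c} : Finset V) ≠ {w, b, c} := by
    intro h
    have hb : b ∈ ({w, a, c} : Finset V) := by rw [h]; simp
    simp only [Finset.mem_insert, Finset.mem_singleton] at hb
    rcases hb with h | h | h
    exacts [hwb h.symm, hab h.symm, hbc h]
  set T : Finset (Finset V) := {{w, a, b}, {w, a, c}, {w, b, c}} with hTdef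
  have hT : T.card = 3 := by
    rw [hTdef, Finset.card_insert_of_notMem (by simp [hne1, hne2]),
      Finset.card_insert_of_notMem (by simp [hne3]), Finset.card_singleton]
  have hTF : T ⊆ F := by
    intro s hsT
    rw [hTdef] at hsT
    simp only [Finset.mem_insert, Finset.mem_singleton] at hsT
    rw [hFdef, Finset.mem_filter]
    rcases hsT with rfl | rfl | rfl
    · exact ⟨hmem _ (by intro x hx; rw [hXdef]; simp only [Finset.mem_insert, Finset.mem_singleton] at hx ⊢; rcases hx with rfl | rfl | rfl <;> simp)
        (card3_aux hwa hwb hab), e1⟩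
    · exact ⟨hmem _ (by intro x hx; rw [hXdef]; simp only [Finset.mem_insert, Finset.mem_singleton] at hx ⊢; rcases hx with rfl | rfl | rfl <;> simp)
        (card3_aux hwa hwc hac), e2⟩
    · exact ⟨hmem _ (by intro x hx; rw [hXdef]; simp only [Finset.mem_insert, Finset.mem_singleton] at hx ⊢; rcases hx with rfl | rfl | rfl <;> simp)
        (card3_aux hwb hwc hbc), e3⟩
  have h3le : 3 ≤ F.card := by rw [← hT]; exact Finset.card_le_card hTF
  have h4ge : F.card ≤ 4 := by rw [← hpow]; exact Finset.card_le_card (Finset.filter_subset _ _)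
  have hspan : spanCount H X = F.card := rfl
  have hF4 : F.card = 4 := by omega
  have hFeq : F = X.powersetCard 3 :=
    Finset.eq_of_subset_of_card_le (Finset.filter_subset _ _) (by omega)
  have habc : ({a, b, c} : Finset V) ∈ X.powersetCard 3 :=
    hmem _ (by intro x hx; rw [hXdef]; simp only [Finset.mem_insert, Finset.mem_singleton] at hx ⊢; rcases hx with rfl | rfl | rfl <;> simp)
      (card3_aux hab hac hbc)
  have habc2 : ({a, b, c} : Finset V) ∈ F := by rw [hFeq]; exact habc
  rw [hFdef, Finset.mem_filter] at habc2
  exact habc2.2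

lemma quadB {w a b c : V} (hwa : w ≠ a) (hwb : w ≠ b) (hwc : w ≠ c)
    (hab : a ≠ b) (hac : a ≠ c) (hbc : b ≠ c)
    (e1 : ({w, a, b} : Finset V) ∉ H) (e2 : ({w, a, c} : Finset V) ∉ H)
    (e3 : ({w, b, c} : Finset V) ∉ H)
    (hs : spanCount H {w, a, b, c} ≠ 1) (hin : ({a, b, c} : Finset V) ∈ H) : False := by
  set X : Finset V := {w, a, b, c} with hXdef
  have hX : X.card = 4 := card4_aux hwa hwb hwc hab hac hbc
  have hpow : (X.powersetCard 3).card = 4 := by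
    rw [Finset.card_powersetCard, hX]; rfl
  have hmem : ∀ s : Finset V, s ⊆ X → s.card = 3 → s ∈ X.powersetCard 3 := by
    intro s h1 h2; rw [Finset.mem_powersetCard]; exact ⟨h1, h2⟩
  set F : Finset (Finset V) := (X.powersetCard 3).filter (· ∈ H) with hFdef
  have hne1 : ({w, a, b} : Finset V) ≠ {w, a, c} := by
    intro h
    have hc : c ∈ ({w, a, b} : Finset V) := by rw [h]; simp
    simp only [Finset.mem_insert, Finset.mem_singleton] at hc
    rcases hc with h | h | h
    exacts [hwc h.symm, hac h.symm, hbc h.symm]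
  have hne2 : ({w, a, b} : Finset V) ≠ {w, b, c} := by
    intro h
    have hc : c ∈ ({w, a, b} : Finset V) := by rw [h]; simp
    simp only [Finset.mem_insert, Finset.mem_singleton] at hc
    rcases hc with h | h | h
    exacts [hwc h.symm, hac h.symm, hbc h.symm]
  have hne3 : ({w, a, c} : Finset V) ≠ {w, b, c} := by
    intro h
    have hb : b ∈ ({w, a, c} : Finset V) := by rw [h]; simp
    simp only [Finset.mem_insert, Finset.mem_singleton] at hb
    rcases hb with h | h | h
    exacts [hwb h.symm, hab h.symm, hbc h]
  set T : Finset (Finset V) := {{w, a, b}, {w, a, c}, {w, b, c}} with hTdef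
  have hT : T.card = 3 := by
    rw [hTdef, Finset.card_insert_of_notMem (by simp [hne1, hne2]),
      Finset.card_insert_of_notMem (by simp [hne3]), Finset.card_singleton]
  have hTP : T ⊆ X.powersetCard 3 := by
    intro s hsT
    rw [hTdef] at hsT
    simp only [Finset.mem_insert, Finset.mem_singleton] at hsT
    rcases hsT with rfl | rfl | rfl
    · exact hmem _ (by intro x hx; rw [hXdef]; simp only [Finset.mem_insert, Finset.mem_singleton] at hx ⊢; rcases hx with rfl | rfl | rfl <;> simp)
        (card3_aux hwa hwb hab)
    · exact hmem _ (by intro x hx; rw [hXdef]; simp only [Finset.mem_insert, Finset.mem_singleton] at hx ⊢; rcases hx with rfl | rfl | rfl <;> simp)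
        (card3_aux hwa hwc hac)
    · exact hmem _ (by intro x hx; rw [hXdef]; simp only [Finset.mem_insert, Finset.mem_singleton] at hx ⊢; rcases hx with rfl | rfl | rfl <;> simp)
        (card3_aux hwb hwc hbc)
  have hdisj : Disjoint T F := by
    rw [Finset.disjoint_left]
    intro s hsT hsF
    rw [hFdef, Finset.mem_filter] at hsF
    rw [hTdef] at hsT
    simp only [Finset.mem_insert, Finset.mem_singleton] at hsT
    rcases hsT with rfl | rfl | rfl
    exacts [e1 hsF.2, e2 hsF.2, e3 hsF.2]
  have hunion : T ∪ F ⊆ X.powersetCard 3 :=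
    Finset.union_subset hTP (Finset.filter_subset _ _)
  have hle : T.card + F.card ≤ 4 := by
    rw [← Finset.card_union_of_disjoint hdisj, ← hpow]
    exact Finset.card_le_card hunion
  have h1le : 1 ≤ F.card := by
    have : ({a, b, c} : Finset V) ∈ F := by
      rw [hFdef, Finset.mem_filter]
      exact ⟨hmem _ (by intro x hx; rw [hXdef]; simp only [Finset.mem_insert, Finset.mem_singleton] at hx ⊢; rcases hx with rfl | rfl | rfl <;> simp)
        (card3_aux hab hac hbc), hin⟩
    exact Finset.card_pos.mpr ⟨_, this⟩
  have hspan : spanCount H X = F.card := rfl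
  omega

/-- Greedy Ramsey bound: `R(a+1, b+1) ≤ 2^(a+b)`. -/
lemma ramsey_aux (Adj : V → V → Prop) (hsym : ∀ x y, Adj x y → Adj y x) :
    ∀ (n a b : ℕ), a + b ≤ n → ∀ W : Finset V, 2 ^ (a + b) ≤ W.card →
      (∃ S, S ⊆ W ∧ S.card = a + 1 ∧ ∀ x ∈ S, ∀ y ∈ S, x ≠ y → Adj x y) ∨
      (∃ S, S ⊆ W ∧ S.card = b + 1 ∧ ∀ x ∈ S, ∀ y ∈ S, x ≠ y → ¬Adj x y) := by
  classical
  intro n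
  induction n with
  | zero =>
    intro a b hab W hW
    obtain ⟨v, hv⟩ := Finset.card_pos.mp (lt_of_lt_of_le (by positivity) hW)
    left
    refine ⟨{v}, Finset.singleton_subset_iff.mpr hv, by simp; omega, ?_⟩
    intro x hx y hy hxy
    simp only [Finset.mem_singleton] at hx hy
    exact absurd (hx.trans hy.symm) hxy
  | succ n ih =>
    intro a b hab W hW
    match a, b with
    | 0, b =>
      obtain ⟨v, hv⟩ := Finset.card_pos.mp (lt_of_lt_of_le (by positivity) hW)
      left
      refine ⟨{v}, Finset.singleton_subset_iff.mpr hv, by simp, ?_⟩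
      intro x hx y hy hxy
      simp only [Finset.mem_singleton] at hx hy
      exact absurd (hx.trans hy.symm) hxy
    | a + 1, 0 =>
      obtain ⟨v, hv⟩ := Finset.card_pos.mp (lt_of_lt_of_le (by positivity) hW)
      right
      refine ⟨{v}, Finset.singleton_subset_iff.mpr hv, by simp, ?_⟩
      intro x hx y hy hxy
      simp only [Finset.mem_singleton] at hx hy
      exact absurd (hx.trans hy.symm) hxy
    | a + 1, b + 1 =>
      obtain ⟨v, hv⟩ := Finset.card_pos.mp (lt_of_lt_of_le (by positivity) hW)
      set A : Finset V := (W.erase v).filter (fun y => Adj v y) with hAdef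
      set B : Finset V := (W.erase v).filter (fun y => ¬ Adj v y) with hBdef
      have hcard : A.card + B.card = W.card - 1 := by
        rw [hAdef, hBdef, Finset.card_filter_add_card_filter_not,
          Finset.card_erase_of_mem hv]
      have hkey : 2 ^ (a + b + 1) ≤ A.card ∨ 2 ^ (a + b + 1) ≤ B.card := by
        have h2 : 2 ^ (a + 1 + (b + 1)) = 2 * 2 ^ (a + b + 1) := by ring
        rw [h2] at hW
        omega
      have hAW : A ⊆ W := (Finset.filter_subset _ _).trans (Finset.erase_subset _ _)
      have hBW : B ⊆ W := (Finset.filter_subset _ _).trans (Finset.erase_subset _ _)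
      rcases hkey with hA | hB
      · rcases ih a (b + 1) (by omega) A (by rwa [show a + (b + 1) = a + b + 1 by ring]) with
          ⟨S, hS, hScard, hSadj⟩ | ⟨S, hS, hScard, hSadj⟩
        · left
          have hvS : v ∉ S := fun h => Finset.notMem_erase v W
            (Finset.filter_subset _ _ (hS h))
          refine ⟨insert v S, ?_, ?_, ?_⟩
          · exact Finset.insert_subset hv (hS.trans hAW)
          · rw [Finset.card_insert_of_notMem hvS, hScard]
          · intro x hx y hy hxy
            rcases Finset.mem_insert.mp hx with rfl | hx' <;>
              rcases Finset.mem_insert.mp hy with rfl | hy'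
            · exact absurd rfl hxy
            · exact (Finset.mem_filter.mp (hS hy')).2
            · exact hsym _ _ (Finset.mem_filter.mp (hS hx')).2
            · exact hSadj x hx' y hy' hxy
        · right
          exact ⟨S, hS.trans hAW, hScard, hSadj⟩
      · rcases ih (a + 1) b (by omega) B (by rwa [show a + 1 + b = a + b + 1 by ring]) with
          ⟨S, hS, hScard, hSadj⟩ | ⟨S, hS, hScard, hSadj⟩
        · left
          exact ⟨S, hS.trans hBW, hScard, hSadj⟩
        · right
          have hvS : v ∉ S := fun h => Finset.notMem_erase v W
            (Finset.filter_subset _ _ (hS h))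
          refine ⟨insert v S, ?_, ?_, ?_⟩
          · exact Finset.insert_subset hv (hS.trans hBW)
          · rw [Finset.card_insert_of_notMem hvS, hScard]
          · intro x hx y hy hxy
            rcases Finset.mem_insert.mp hx with rfl | hx' <;>
              rcases Finset.mem_insert.mp hy with rfl | hy'
            · exact absurd rfl hxy
            · exact (Finset.mem_filter.mp (hS hy')).2
            · exact fun h => (Finset.mem_filter.mp (hS hx')).2 (hsym _ _ h)
            · exact hSadj x hx' y hy' hxy

end aux

theorem stmt_13 {V : Type*} [Fintype V] [DecidableEq V] (H : Finset (Finset V))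
    (h3 : ∀ e ∈ H, e.card = 3) (hn : 4 ≤ Fintype.card V)
    (hfree : ∀ X : Finset V, X.card = 4 → spanCount H X ≠ 1 ∧ spanCount H X ≠ 3) :
    ∃ S : Finset V,
      ((∀ t : Finset V, t ⊆ S → t.card = 3 → t ∈ H) ∨
        (∀ t : Finset V, t ⊆ S → t ∉ H)) ∧
      (1 / 2 : ℝ) * Real.logb 2 (Fintype.card V) ≤ S.card := by
  classical
  set n : ℕ := Fintype.card V with hndef
  set x : ℝ := Real.logb 2 n with hxdef
  have hn0 : (0 : ℝ) < n := by positivity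
  have hx2 : (2 : ℝ) ≤ x := by
    have h4 : Real.logb 2 4 = 2 := by
      rw [show (4 : ℝ) = (2 : ℝ) ^ ((2 : ℕ) : ℝ) by rw [Real.rpow_natCast]; norm_num]
      exact Real.logb_rpow (by norm_num) (by norm_num)
    calc (2 : ℝ) = Real.logb 2 4 := h4.symm
      _ ≤ x := Real.logb_le_logb_of_le (by norm_num) (by norm_num) (by exact_mod_cast hn)
  set t : ℕ := ⌈(1 / 2 : ℝ) * x⌉₊ with htdef
  have hxpos : (0 : ℝ) < (1 / 2 : ℝ) * x := by linarith
  have ht1 : 1 ≤ t := Nat.one_le_iff_ne_zero.mpr (by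
    intro h
    have := Nat.ceil_eq_zero.mp h
    linarith)
  have hle : (1 / 2 : ℝ) * x ≤ t := Nat.le_ceil _
  have hlt : (t : ℝ) < (1 / 2 : ℝ) * x + 1 := Nat.ceil_lt_add_one (le_of_lt hxpos)
  -- 2 ^ ((t-1)+(t-1)) ≤ n
  have hpowle : 2 ^ ((t - 1) + (t - 1)) ≤ n := by
    have hcast : (((t - 1) + (t - 1) : ℕ) : ℝ) = 2 * (t : ℝ) - 2 := by
      push_cast [Nat.cast_sub ht1]
      ring
    have hexp : (((t - 1) + (t - 1) : ℕ) : ℝ) ≤ x := by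
      rw [hcast]; linarith
    have : ((2 : ℝ)) ^ (((t - 1) + (t - 1) : ℕ)) ≤ (n : ℝ) := by
      calc ((2 : ℝ)) ^ (((t - 1) + (t - 1) : ℕ))
          = (2 : ℝ) ^ ((((t - 1) + (t - 1) : ℕ) : ℝ)) := by
            rw [Real.rpow_natCast]
        _ ≤ (2 : ℝ) ^ x := by
            apply Real.rpow_le_rpow_left_iff (by norm_num : (1:ℝ) < 2) |>.mpr hexp
        _ = n := Real.rpow_logb (by norm_num) (by norm_num) hn0
    exact_mod_cast this
  -- the graph
  have : Nonempty V := Fintype.card_pos_iff.mp (by omega)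
  set v0 : V := Classical.arbitrary V with hv0def
  set Adj : V → V → Prop := fun x y => x ≠ v0 ∧ y ≠ v0 ∧ ({v0, x, y} : Finset V) ∈ H
    with hAdjdef
  have hsym : ∀ x y, Adj x y → Adj y x := by
    intro x y ⟨h1, h2, h3'⟩
    refine ⟨h2, h1, ?_⟩
    rwa [show ({v0, y, x} : Finset V) = {v0, x, y} by rw [Finset.pair_comm y x]]
  have hcardU : 2 ^ ((t - 1) + (t - 1)) ≤ (Finset.univ : Finset V).card := by
    rwa [Finset.card_univ]
  rcases ramsey_aux Adj hsym ((t - 1) + (t - 1)) (t - 1) (t - 1) le_rfl Finset.univ hcardU with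
    ⟨S, _, hScard, hSadj⟩ | ⟨S, _, hScard, hSadj⟩
  · -- clique case
    refine ⟨S, Or.inl ?_, ?_⟩
    · intro u hu hcard3
      obtain ⟨a, b, c, hab, hac, hbc, rfl⟩ := Finset.card_eq_three.mp hcard3
      have ha : a ∈ S := hu (by simp)
      have hb : b ∈ S := hu (by simp)
      have hc : c ∈ S := hu (by simp)
      obtain ⟨hav, hbv, e1⟩ := hSadj a ha b hb hab
      obtain ⟨_, hcv, e2⟩ := hSadj a ha c hc hac
      obtain ⟨_, _, e3⟩ := hSadj b hb c hc hbc
      exact quadA H (Ne.symm hav) (Ne.symm hbv) (Ne.symm hcv) hab hac hbc e1 e2 e3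
        (hfree _ (card4_aux (Ne.symm hav) (Ne.symm hbv) (Ne.symm hcv) hab hac hbc)).2
    · rw [hScard]
      have : ((t - 1 + 1 : ℕ) : ℝ) = (t : ℝ) := by
        push_cast [Nat.cast_sub ht1]; ring
      rw [this]
      exact hle
  · -- independent case
    refine ⟨S, Or.inr ?_, ?_⟩
    · intro u hu hu'
      have hcard3 : u.card = 3 := h3 u hu'
      obtain ⟨a, b, c, hab, hac, hbc, rfl⟩ := Finset.card_eq_three.mp hcard3
      have ha : a ∈ S := hu (by simp)
      have hb : b ∈ S := hu (by simp)
      have hc : c ∈ S := hu (by simp)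
      have nab := hSadj a ha b hb hab
      have nac := hSadj a ha c hc hac
      have nbc := hSadj b hb c hc hbc
      by_cases hav : a = v0
      · exact nbc ⟨fun h => hab (hav.trans h.symm), fun h => hac (hav.trans h.symm),
          by rw [← hav]; exact hu'⟩
      · by_cases hbv : b = v0
        · refine nac ⟨hav, fun h => hbc (hbv.trans h.symm), ?_⟩
          rw [← hbv, Finset.insert_comm]
          exact hu'
        · by_cases hcv : c = v0
          · refine nab ⟨hav, hbv, ?_⟩
            rw [← hcv, Finset.insert_comm, Finset.pair_comm c b]
            exact hu'
          · have e1 : ({v0, a, b} : Finset V) ∉ H := fun h => nab ⟨hav, hbv, h⟩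
            have e2 : ({v0, a, c} : Finset V) ∉ H := fun h => nac ⟨hav, hcv, h⟩
            have e3 : ({v0, b, c} : Finset V) ∉ H := fun h => nbc ⟨hbv, hcv, h⟩
            exact quadB H (fun h => hav h.symm) (fun h => hbv h.symm) (fun h => hcv h.symm)
              hab hac hbc e1 e2 e3
              (hfree _ (card4_aux (fun h => hav h.symm) (fun h => hbv h.symm)
                (fun h => hcv h.symm) hab hac hbc)).1 hu'
    · rw [hScard]
      have : ((t - 1 + 1 : ℕ) : ℝ) = (t : ℝ) := by
        push_cast [Nat.cast_sub ht1]; ring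
      rw [this]
      exact hle
end
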